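/- arXiv:1912.11483 — 8 statements merged into one kernel-verified Lean document; each statement's English description precedes it below -/
import Mathlib

section
/- Let F(x) := ∫₀ˣ (1−t⁶)^{−1/2} dt for x ∈ [0,1]. For every s ∈ [0,1], set y := 2s√(1−s⁶)/√(1+8s⁶) (note y ∈ [0,1]). If 2F(s) ≤ F(1), then F(y) = 2F(s); if 2F(s) ≥ F(1), then F(y) = 2F(1) − 2F(s). (This is Shinohara's double-angle formula sin_{2,6}(2x) = 2 sin_{2,6}x cos_{2,6}x / √(1+8 sin_{2,6}⁶x) for x ∈ [0, π_{2,6}/2].) -/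
/-!
Write `y(s) = 2s√(1-s⁶)/√(1+8s⁶)` and `C(s) = 1 - 20s⁶ - 8s¹²`. Then `1 - y⁶ = C²/(1+8s⁶)³` and
`y' = 2C/(√(1-s⁶)(1+8s⁶)^{3/2})`, so by the chain rule `(F ∘ y)' = 2 sign(C) F'`. Since `C`
decreases from `1` to `-27` on `[0,1]`, integrating from `0` gives `F ∘ y = 2F` where `C ≥ 0`, and
integrating from `1` (where `y = 0`) gives `F ∘ y = 2F(1) - 2F` where `C < 0`. As `F ∘ y ≤ F(1)`,
the sign of `C(s)` decides how `2F(s)` compares with `F(1)`.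
-/

/-- `F = F_{2,6}`, the incomplete integral `∫₀ˣ (1−t⁶)^{−1/2} dt`. -/
noncomputable def F26 (x : ℝ) : ℝ := ∫ t in (0:ℝ)..x, (1 - t ^ 6) ^ (-(1/2) : ℝ)

open Real MeasureTheory Set intervalIntegral

theorem intervalIntegrable_one_sub_pow_rpow_neg {n : ℕ} (hn : n ≠ 0) {r : ℝ} (hr0 : 0 ≤ r)
    (hr1 : r < 1) : IntervalIntegrable (fun t : ℝ => (1 - t ^ n) ^ (-r)) volume 0 1 := by
  have hdom : IntervalIntegrable (fun t : ℝ => (1 - t) ^ (-r)) volume 0 1 := by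
    simpa using ((intervalIntegrable_rpow' (a := 0) (b := 1) (by linarith : -1 < -r)).comp_sub_left
      1).symm
  refine hdom.mono_fun' (by fun_prop : Measurable _).aestronglyMeasurable ?_
  filter_upwards [ae_restrict_mem measurableSet_uIoc] with t ht
  obtain ⟨ht0, ht1⟩ : t ∈ Ioc 0 1 := by rwa [uIoc_of_le zero_le_one] at ht
  have htn : t ^ n ≤ t := pow_le_of_le_one ht0.le ht1 hn
  rw [norm_of_nonneg (rpow_nonneg (by linarith) _)]
  rcases ht1.lt_or_eq with hlt | rfl
  · exact rpow_le_rpow_of_nonpos (by linarith) (by linarith) (by linarith)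
  · simp

namespace F26

theorem intervalIntegrable {b : ℝ} (hb : b ∈ Icc (0:ℝ) 1) :
    IntervalIntegrable (fun t : ℝ => (1 - t ^ 6) ^ (-(1/2) : ℝ)) volume 0 b :=
  (intervalIntegrable_one_sub_pow_rpow_neg (by norm_num) (by norm_num) (by norm_num)).mono_set
    (uIcc_subset_uIcc_left (by rwa [uIcc_of_le zero_le_one]))

theorem continuousOn : ContinuousOn F26 (Icc 0 1) := by
  have := continuousOn_primitive_interval
    ((intervalIntegrable_iff' (by finiteness)).1 (intervalIntegrable ⟨zero_le_one, le_rfl⟩))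
  rwa [uIcc_of_le zero_le_one] at this

theorem monotoneOn : MonotoneOn F26 (Icc 0 1) := by
  intro x hx y hy hxy
  refine integral_mono_interval le_rfl hx.1 hxy ?_ (intervalIntegrable hy)
  filter_upwards [ae_restrict_mem measurableSet_Ioc] with t ht
  have : t ^ 6 ≤ 1 := pow_le_one₀ ht.1.le (ht.2.trans hy.2)
  exact rpow_nonneg (by linarith) _

theorem hasDerivAt {v : ℝ} (hv0 : 0 ≤ v) (hv1 : v < 1) : HasDerivAt F26 (√(1 - v ^ 6))⁻¹ v := by
  have hpos : 0 < 1 - v ^ 6 := sub_pos.2 (pow_lt_one₀ hv0 hv1 (by norm_num))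
  have := integral_hasDerivAt_right (intervalIntegrable ⟨hv0, hv1.le⟩)
    (by fun_prop : Measurable _).stronglyMeasurable.stronglyMeasurableAtFilter
    ((by fun_prop : Continuous fun t : ℝ => 1 - t ^ 6).continuousAt.rpow_const (Or.inl hpos.ne'))
  rwa [rpow_neg hpos.le, ← sqrt_eq_rpow] at this

end F26

noncomputable def sinDouble (s : ℝ) : ℝ := 2 * s * √(1 - s ^ 6) / √(1 + 8 * s ^ 6)

/-- `cos_{2,6}(2x) = cosDoubleNum s / (1 + 8 s⁶)^{3/2}` for `s = sin_{2,6} x`. -/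
def cosDoubleNum (s : ℝ) : ℝ := 1 - 20 * s ^ 6 - 8 * s ^ 12

theorem cosDoubleNum_strictAntiOn : StrictAntiOn cosDoubleNum (Ici 0) := by
  intro x hx y _ hxy
  have h6 : x ^ 6 < y ^ 6 := pow_lt_pow_left₀ hxy hx (by norm_num)
  have h12 : x ^ 12 < y ^ 12 := pow_lt_pow_left₀ hxy hx (by norm_num)
  simp only [cosDoubleNum]
  linarith

theorem one_sub_sinDouble_pow_six {s : ℝ} (hs : s ^ 6 ≤ 1) :
    1 - sinDouble s ^ 6 = cosDoubleNum s ^ 2 / (1 + 8 * s ^ 6) ^ 3 := by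
  have hB : 0 < 1 + 8 * s ^ 6 := by positivity
  have h6 : sinDouble s ^ 6 = 64 * s ^ 6 * (1 - s ^ 6) ^ 3 / (1 + 8 * s ^ 6) ^ 3 :=
    calc sinDouble s ^ 6 = 64 * s ^ 6 * (√(1 - s ^ 6) ^ 2) ^ 3 / (√(1 + 8 * s ^ 6) ^ 2) ^ 3 := by
          rw [sinDouble]; ring
      _ = _ := by rw [sq_sqrt (by linarith), sq_sqrt hB.le]
  rw [h6, cosDoubleNum]
  field_simp
  ring

theorem sinDouble_mem_Icc {s : ℝ} (hs0 : 0 ≤ s) (hs1 : s ≤ 1) : sinDouble s ∈ Icc 0 1 := by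
  have hY0 : 0 ≤ sinDouble s := by unfold sinDouble; positivity
  have h := one_sub_sinDouble_pow_six (pow_le_one₀ hs0 hs1)
  have : 0 ≤ cosDoubleNum s ^ 2 / (1 + 8 * s ^ 6) ^ 3 := by positivity
  exact ⟨hY0, (pow_le_one_iff_of_nonneg (n := 6) hY0 (by norm_num)).1 (by linarith)⟩

theorem sinDouble_lt_one {s : ℝ} (hs0 : 0 ≤ s) (hs1 : s ≤ 1) (hC : cosDoubleNum s ≠ 0) :
    sinDouble s < 1 := by
  have h := one_sub_sinDouble_pow_six (pow_le_one₀ hs0 hs1)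
  have : 0 < cosDoubleNum s ^ 2 / (1 + 8 * s ^ 6) ^ 3 := by positivity
  exact (pow_lt_one_iff_of_nonneg (n := 6) (sinDouble_mem_Icc hs0 hs1).1 (by norm_num)).1
    (by linarith)

theorem continuous_sinDouble : Continuous sinDouble := by
  unfold sinDouble
  fun_prop (disch := intro; positivity)

theorem hasDerivAt_sinDouble {x : ℝ} (hx : x ^ 6 < 1) :
    HasDerivAt sinDouble (2 * cosDoubleNum x / (√(1 - x ^ 6) * √(1 + 8 * x ^ 6) ^ 3)) x := by
  have hA : 0 < 1 - x ^ 6 := by linarith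
  have hB : 0 < 1 + 8 * x ^ 6 := by positivity
  have hA' : 0 < √(1 - x ^ 6) := sqrt_pos.2 hA
  have hB' : 0 < √(1 + 8 * x ^ 6) := sqrt_pos.2 hB
  have h : HasDerivAt sinDouble _ x :=
    (((hasDerivAt_id x).const_mul 2).mul (((hasDerivAt_pow 6 x).const_sub 1).sqrt hA.ne')).div
      (((hasDerivAt_pow 6 x).const_mul 8 |>.const_add 1).sqrt hB.ne') hB'.ne'
  refine h.congr_deriv ?_
  have hA2 := sq_sqrt hA.le
  have hB2 := sq_sqrt hB.le
  simp only [id, Pi.mul_apply, cosDoubleNum]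
  set A := √(1 - x ^ 6)
  set B := √(1 + 8 * x ^ 6)
  field_simp
  linear_combination (2 * A ^ 2 - 6 * x ^ 6) * hB2 + (2 * (1 + 8 * x ^ 6) - 48 * x ^ 6) * hA2

theorem hasDerivAt_F26_sinDouble {x : ℝ} (hx0 : 0 ≤ x) (hx1 : x < 1) (hC : cosDoubleNum x ≠ 0) :
    HasDerivAt (fun s => F26 (sinDouble s))
      (2 * Real.sign (cosDoubleNum x) * (√(1 - x ^ 6))⁻¹) x := by
  have hx6 : x ^ 6 < 1 := pow_lt_one₀ hx0 hx1 (by norm_num)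
  have hB : 0 < 1 + 8 * x ^ 6 := by positivity
  have h := (F26.hasDerivAt (sinDouble_mem_Icc hx0 hx1.le).1
    (sinDouble_lt_one hx0 hx1.le hC)).comp x (hasDerivAt_sinDouble hx6)
  have hcos : √(1 - sinDouble x ^ 6) = |cosDoubleNum x| / √(1 + 8 * x ^ 6) ^ 3 := by
    rw [one_sub_sinDouble_pow_six hx6.le,
      ← sqrt_sq (by positivity : 0 ≤ |cosDoubleNum x| / √(1 + 8 * x ^ 6) ^ 3), div_pow, sq_abs,
      ← pow_mul, mul_comm 3 2, pow_mul, sq_sqrt hB.le]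
  refine h.congr_deriv ?_
  have hA' : 0 < √(1 - x ^ 6) := sqrt_pos.2 (by linarith)
  have hB' : 0 < √(1 + 8 * x ^ 6) := sqrt_pos.2 hB
  rw [hcos]
  rcases hC.lt_or_gt with hneg | hpos
  · rw [Real.sign_of_neg hneg, abs_of_neg hneg]
    field_simp
  · rw [Real.sign_of_pos hpos, abs_of_pos hpos]
    field_simp

theorem continuousOn_F26_comp_sinDouble : ContinuousOn (fun s => F26 (sinDouble s)) (Icc 0 1) :=
  F26.continuousOn.comp continuous_sinDouble.continuousOn fun _ hs => sinDouble_mem_Icc hs.1 hs.2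

theorem F26_sinDouble_of_cosDoubleNum_nonneg {s : ℝ} (hs0 : 0 ≤ s) (hC : 0 ≤ cosDoubleNum s) :
    F26 (sinDouble s) = 2 * F26 s := by
  have hs1 : s < 1 := by
    by_contra! h
    have : cosDoubleNum 1 < 0 := by norm_num [cosDoubleNum]
    linarith [cosDoubleNum_strictAntiOn.antitoneOn (zero_le_one : (0:ℝ) ≤ 1) hs0 h]
  refine eq_of_has_deriv_right_eq (f' := fun x => 2 * (√(1 - x ^ 6))⁻¹) (fun x hx => ?_)
    (fun x hx => ((F26.hasDerivAt hx.1 (hx.2.trans hs1)).const_mul 2).hasDerivWithinAt)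
    (continuousOn_F26_comp_sinDouble.mono (Icc_subset_Icc le_rfl hs1.le))
    (continuousOn_const.mul (F26.continuousOn.mono (Icc_subset_Icc le_rfl hs1.le)))
    (by simp [sinDouble, F26]) s ⟨hs0, le_rfl⟩
  have hCx : 0 < cosDoubleNum x := hC.trans_lt (cosDoubleNum_strictAntiOn hx.1 hs0 hx.2)
  simpa [Real.sign_of_pos hCx] using
    (hasDerivAt_F26_sinDouble hx.1 (hx.2.trans hs1) hCx.ne').hasDerivWithinAt

theorem F26_sinDouble_of_cosDoubleNum_neg {s : ℝ} (hs0 : 0 ≤ s) (hs1 : s ≤ 1)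
    (hC : cosDoubleNum s < 0) : F26 (sinDouble s) = 2 * F26 1 - 2 * F26 s := by
  have hconst := eq_of_has_deriv_right_eq (f' := fun _ => 0)
    (f := fun x => F26 (sinDouble x) + 2 * F26 x) (fun x hx => ?_)
    (fun x _ => (hasDerivAt_const x _).hasDerivWithinAt)
    ((continuousOn_F26_comp_sinDouble.mono (Icc_subset_Icc hs0 le_rfl)).add
      (continuousOn_const.mul (F26.continuousOn.mono (Icc_subset_Icc hs0 le_rfl))))
    continuousOn_const rfl 1 ⟨hs1, le_rfl⟩
  · have : F26 (sinDouble 1) = 0 := by simp [sinDouble, F26]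
    linarith
  · have hCx : cosDoubleNum x < 0 :=
      (cosDoubleNum_strictAntiOn.antitoneOn hs0 (hs0.trans hx.1) hx.1).trans_lt hC
    have h := (hasDerivAt_F26_sinDouble (hs0.trans hx.1) hx.2 hCx.ne).add
      ((F26.hasDerivAt (hs0.trans hx.1) hx.2).const_mul 2)
    rw [Real.sign_of_neg hCx] at h
    exact (h.congr_deriv (by ring)).hasDerivWithinAt

/-- Shinohara's double-angle formula for `sin_{2,6}`. -/
theorem double_angle_sin_two_six (s : ℝ) (hs : s ∈ Set.Icc (0:ℝ) 1) :
    (2 * s * Real.sqrt (1 - s ^ 6) / Real.sqrt (1 + 8 * s ^ 6)) ∈ Set.Icc (0:ℝ) 1 ∧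
    (2 * F26 s ≤ F26 1 →
      F26 (2 * s * Real.sqrt (1 - s ^ 6) / Real.sqrt (1 + 8 * s ^ 6)) = 2 * F26 s) ∧
    (F26 1 ≤ 2 * F26 s →
      F26 (2 * s * Real.sqrt (1 - s ^ 6) / Real.sqrt (1 + 8 * s ^ 6))
        = 2 * F26 1 - 2 * F26 s) := by
  obtain ⟨hs0, hs1⟩ := hs
  have hmem : sinDouble s ∈ Icc 0 1 := sinDouble_mem_Icc hs0 hs1
  have hle : F26 (sinDouble s) ≤ F26 1 := F26.monotoneOn hmem ⟨zero_le_one, le_rfl⟩ hmem.2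
  refine ⟨hmem, fun h => ?_, fun h => ?_⟩ <;> change F26 (sinDouble s) = _ <;>
    rcases le_or_gt 0 (cosDoubleNum s) with hC | hC
  · exact F26_sinDouble_of_cosDoubleNum_nonneg hs0 hC
  · linarith [F26_sinDouble_of_cosDoubleNum_neg hs0 hs1 hC]
  · linarith [F26_sinDouble_of_cosDoubleNum_nonneg hs0 hC]
  · exact F26_sinDouble_of_cosDoubleNum_neg hs0 hs1 hC
end

section
/- Let G(x) := ∫₀ˣ (1−t⁶)^{−5/6} dt for x ∈ [0,1]. For every s ∈ [0,1] with 2G(s) ≤ G(1), set A := 1 + 32 s⁶ (1−s⁶), and y := 2^{1/6} · s · (1−s⁶)^{1/6} · (3 + √A)^{1/2} / ( A^{1/4} · (1 + √A)^{1/6} ). Then y ∈ [0,1] and G(y) = 2 G(s). (This is the double-angle formula for sin_{6/5,6}: for x ∈ [0, π_{6/5,6}/4], sin_{6/5,6}(2x) = 2^{1/6} sin_{6/5,6}x cos_{6/5,6}^{1/5}x (3+√(1+32 sin⁶ cos^{6/5}))^{1/2} / ((1+32 sin⁶ cos^{6/5})^{1/4} (1+√(1+32 sin⁶ cos^{6/5}))^{1/6}),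 since cos_{6/5,6}x = (1−sin_{6/5,6}⁶x)^{5/6}.) -/
/-- `G = F_{6/5,6}`, the incomplete integral `∫₀ˣ (1−t⁶)^{−5/6} dt`. -/
noncomputable def G656 (x : ℝ) : ℝ := ∫ t in (0:ℝ)..x, (1 - t ^ 6) ^ (-(5/6) : ℝ)

/-!
Write `u = s⁶` and `r = √(1 + 32 u (1 - u))`. Then `y⁶ = P(r)` with
`P(r) = (r - 1)(r + 3)³ / (16 r³)`, and since `r² - 1 = 32 u (1 - u)` and
`9 - r² = 8 (1 - 2u)²`, the product `P(1 - P) = 64 u (1 - u) (1 - 2u)⁶ / r⁶` is a perfect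
sixth power times `1 - u`. This makes `d/ds G(y(s)) = 2 G'(s)` a rational identity for
`0 < s < s⋆ = 2^{-1/6}`, where `1 < r < 3`. Both sides vanish at `s = 0`, so
`G(y(s)) = 2 G(s)` on `[0, s⋆]`; at `s⋆` this reads `G(1) = 2 G(s⋆)`, so the hypothesis
`2 G(s) ≤ G(1)` forces `s ≤ s⋆` by monotonicity of `G`.
-/

open Set MeasureTheory intervalIntegral Filter Topology Real

/-- `genArcsin q (1 / p)` is `F_{p,q}`, the inverse of `sin_{p,q}` on `[0, 1]`. -/
noncomputable def genArcsin (q : ℕ) (a x : ℝ) : ℝ := ∫ t in (0:ℝ)..x, (1 - t ^ q) ^ (-a)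

section genArcsin

variable {q : ℕ} {a : ℝ}

lemma one_sub_pow_pos_of_mem_Ico (hq : q ≠ 0) {t : ℝ} (ht : t ∈ Ico (0:ℝ) 1) :
    0 < 1 - t ^ q :=
  sub_pos.2 (pow_lt_one₀ ht.1 ht.2 hq)

lemma hasDerivAt_genArcsin (hq : q ≠ 0) {x : ℝ} (hx : x ∈ Ico (0:ℝ) 1) :
    HasDerivAt (genArcsin q a) ((1 - x ^ q) ^ (-a)) x := by
  have hcont : ∀ t ∈ Ico (0:ℝ) 1, ContinuousAt (fun t : ℝ => (1 - t ^ q) ^ (-a)) t :=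
    fun t ht => (by fun_prop : ContinuousAt (fun t : ℝ => 1 - t ^ q) t).rpow_const
      (Or.inl (one_sub_pow_pos_of_mem_Ico hq ht).ne')
  refine integral_hasDerivAt_right ?_ ?_ (hcont x hx)
  · refine ContinuousOn.intervalIntegrable fun t ht => (hcont t ?_).continuousWithinAt
    rw [uIcc_of_le hx.1] at ht
    exact ⟨ht.1, ht.2.trans_lt hx.2⟩
  · exact (by fun_prop : Measurable fun t : ℝ => (1 - t ^ q) ^ (-a))
      |>.stronglyMeasurable.stronglyMeasurableAtFilter

lemma intervalIntegrable_one_sub_pow_rpow_neg_s1 (hq : q ≠ 0) (ha₀ : 0 ≤ a) (ha₁ : a < 1) :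
    IntervalIntegrable (fun t : ℝ => (1 - t ^ q) ^ (-a)) volume 0 1 := by
  have hdom : IntervalIntegrable (fun t : ℝ => (1 - t) ^ (-a)) volume 0 1 := by
    simpa using
      ((intervalIntegrable_rpow' (a := 0) (b := 1) (r := -a) (by linarith)).comp_sub_left 1).symm
  refine hdom.mono_fun'
    (by fun_prop : Measurable fun t : ℝ => (1 - t ^ q) ^ (-a)).aestronglyMeasurable ?_
  filter_upwards [ae_restrict_mem measurableSet_uIoc] with t ht
  rw [uIoc_of_le zero_le_one] at ht
  rw [norm_of_nonneg (rpow_nonneg (sub_nonneg.2 (pow_le_one₀ ht.1.le ht.2)) _)]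
  rcases ht.2.eq_or_lt with rfl | ht₁
  · simp
  · have hpow : t ^ q ≤ t := pow_le_of_le_one ht.1.le ht.2 hq
    exact rpow_le_rpow_of_nonpos (sub_pos.2 ht₁) (by linarith) (by linarith)

lemma continuousOn_genArcsin (hq : q ≠ 0) (ha₀ : 0 ≤ a) (ha₁ : a < 1) :
    ContinuousOn (genArcsin q a) (Icc 0 1) := by
  have h := continuousOn_primitive_interval'
    (intervalIntegrable_one_sub_pow_rpow_neg_s1 hq ha₀ ha₁) (left_mem_uIcc (a := 0) (b := 1))
  rwa [uIcc_of_le zero_le_one] at h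

lemma strictMonoOn_genArcsin (hq : q ≠ 0) (ha₀ : 0 ≤ a) (ha₁ : a < 1) :
    StrictMonoOn (genArcsin q a) (Icc 0 1) := by
  refine strictMonoOn_of_deriv_pos (convex_Icc 0 1) (continuousOn_genArcsin hq ha₀ ha₁) ?_
  intro x hx
  rw [interior_Icc] at hx
  rw [(hasDerivAt_genArcsin hq ⟨hx.1.le, hx.2⟩).deriv]
  exact rpow_pos_of_pos (one_sub_pow_pos_of_mem_Ico hq ⟨hx.1.le, hx.2⟩) _

lemma HasDerivAt.genArcsin_rpow_inv (hq : q ≠ 0) {v : ℝ → ℝ} {v' x : ℝ}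
    (hv : HasDerivAt v v' x) (h₀ : 0 < v x) (h₁ : v x < 1) :
    HasDerivAt (fun t => genArcsin q a (v t ^ (q : ℝ)⁻¹))
      ((1 - v x) ^ (-a) * (v' * (q : ℝ)⁻¹ * v x ^ ((q : ℝ)⁻¹ - 1))) x := by
  have hroot : v x ^ (q : ℝ)⁻¹ ∈ Ico (0:ℝ) 1 :=
    ⟨rpow_nonneg h₀.le _, rpow_lt_one h₀.le h₁ (by positivity)⟩
  have h := (hasDerivAt_genArcsin (a := a) hq hroot).comp x (hv.rpow_const (Or.inl h₀.ne'))
  rwa [rpow_inv_natCast_pow h₀.le hq] at h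

end genArcsin

lemma G656_zero : G656 0 = 0 := integral_same

lemma continuousOn_G656 : ContinuousOn G656 (Icc 0 1) :=
  continuousOn_genArcsin (by norm_num) (by norm_num) (by norm_num)

lemma strictMonoOn_G656 : StrictMonoOn G656 (Icc 0 1) :=
  strictMonoOn_genArcsin (by norm_num) (by norm_num) (by norm_num)

namespace SinSixFifthsSix

noncomputable def R (s : ℝ) : ℝ := Real.sqrt (1 + 32 * s ^ 6 * (1 - s ^ 6))

noncomputable def P (z : ℝ) : ℝ := (z - 1) * (z + 3) ^ 3 / (16 * z ^ 3)

noncomputable def y (s : ℝ) : ℝ :=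
  2 ^ ((1:ℝ)/6) * s * (1 - s ^ 6) ^ ((1:ℝ)/6)
    * Real.sqrt (3 + Real.sqrt (1 + 32 * s ^ 6 * (1 - s ^ 6)))
    / ((1 + 32 * s ^ 6 * (1 - s ^ 6)) ^ ((1:ℝ)/4)
      * (1 + Real.sqrt (1 + 32 * s ^ 6 * (1 - s ^ 6))) ^ ((1:ℝ)/6))

-- `sin_{6/5,6}(π_{6/5,6}/4)`
noncomputable def sStar : ℝ := (2⁻¹ : ℝ) ^ (6⁻¹ : ℝ)

section R

variable {s : ℝ} (hs : s ∈ Icc (0:ℝ) 1)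
include hs

lemma one_sub_pow_six_nonneg : 0 ≤ 1 - s ^ 6 :=
  sub_nonneg.2 (pow_le_one₀ hs.1 hs.2)

lemma R_sq : R s ^ 2 = 1 + 32 * s ^ 6 * (1 - s ^ 6) :=
  sq_sqrt (by have := one_sub_pow_six_nonneg hs; positivity)

lemma one_le_R : 1 ≤ R s :=
  one_le_sqrt.2 (by have := one_sub_pow_six_nonneg hs; nlinarith [pow_nonneg hs.1 6])

lemma R_le_three : R s ≤ 3 := by
  nlinarith [R_sq hs, one_le_R hs, sq_nonneg (1 - 2 * s ^ 6)]

lemma hasDerivAt_R : HasDerivAt R (96 * s ^ 5 * (1 - 2 * s ^ 6) / R s) s := by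
  have hA : HasDerivAt (fun t : ℝ => 1 + 32 * t ^ 6 * (1 - t ^ 6))
      (32 * (6 * s ^ 5) * (1 - s ^ 6) + 32 * s ^ 6 * -(6 * s ^ 5)) s := by
    simpa using
      (((hasDerivAt_pow 6 s).const_mul 32).mul ((hasDerivAt_pow 6 s).const_sub 1)).const_add 1
  have hR0 : R s ≠ 0 := by linarith [one_le_R hs]
  refine (hA.sqrt ?_).congr_deriv ?_
  · rw [← R_sq hs]; positivity
  · change _ / (2 * R s) = _
    field_simp
    ring

end R

lemma one_sub_P {z : ℝ} (hz : z ≠ 0) : 1 - P z = (3 - z) ^ 3 * (1 + z) / (16 * z ^ 3) := by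
  unfold P; field_simp; ring

lemma P_mul_one_sub_P {z : ℝ} (hz : z ≠ 0) :
    P z * (1 - P z) = (z ^ 2 - 1) * (9 - z ^ 2) ^ 3 / (256 * z ^ 6) := by
  rw [one_sub_P hz]; unfold P; field_simp; ring

lemma P_mem_Icc {z : ℝ} (h₁ : 1 ≤ z) (h₃ : z ≤ 3) : P z ∈ Icc 0 1 := by
  have h := one_sub_P (z := z) (by positivity)
  refine ⟨div_nonneg (mul_nonneg (by linarith) (by positivity)) (by positivity), ?_⟩
  have : 0 ≤ (3 - z) ^ 3 * (1 + z) / (16 * z ^ 3) :=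
    div_nonneg (mul_nonneg (pow_nonneg (by linarith) 3) (by linarith)) (by positivity)
  linarith

lemma P_mem_Ioo {z : ℝ} (h₁ : 1 < z) (h₃ : z < 3) : P z ∈ Ioo 0 1 := by
  have h := one_sub_P (z := z) (by positivity)
  refine ⟨div_pos (mul_pos (by linarith) (by positivity)) (by positivity), ?_⟩
  have : 0 < (3 - z) ^ 3 * (1 + z) / (16 * z ^ 3) :=
    div_pos (mul_pos (pow_pos (by linarith) 3) (by linarith)) (by positivity)
  linarith

lemma hasDerivAt_P {z : ℝ} (hz : z ≠ 0) : HasDerivAt P ((9 - z ^ 2) ^ 2 / (16 * z ^ 4)) z := by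
  have h := (((hasDerivAt_id z).sub_const 1).mul (((hasDerivAt_id z).add_const 3).pow 3)).div
    ((hasDerivAt_pow 3 z).const_mul 16) (by positivity)
  refine h.congr_deriv ?_
  simp only [Pi.mul_apply, Pi.pow_apply, id]
  field_simp
  ring

section y

variable {s : ℝ} (hs : s ∈ Icc (0:ℝ) 1)
include hs

lemma y_nonneg : 0 ≤ y s := by
  have := one_sub_pow_six_nonneg hs
  have := hs.1
  unfold y
  positivity

lemma y_pow_six : y s ^ 6 = P (R s) := by
  have hc := one_sub_pow_six_nonneg hs
  have hR₁ := one_le_R hs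
  have hR₂ := R_sq hs
  have hA : 0 ≤ 1 + 32 * s ^ 6 * (1 - s ^ 6) := by rw [← hR₂]; positivity
  have root6 : ∀ {w : ℝ}, 0 ≤ w → (w ^ ((1:ℝ)/6)) ^ 6 = w := fun hw => by
    rw [one_div]; exact_mod_cast rpow_inv_natCast_pow hw (n := 6) (by norm_num)
  have e₁ : Real.sqrt (3 + R s) ^ 6 = (3 + R s) ^ 3 := by
    rw [show 6 = 2 * 3 by rfl, pow_mul, sq_sqrt (by linarith)]
  have e₂ : ((1 + 32 * s ^ 6 * (1 - s ^ 6)) ^ ((1:ℝ)/4)) ^ 6 = R s ^ 3 := by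
    rw [R, sqrt_eq_rpow, ← rpow_mul_natCast hA, ← rpow_mul_natCast hA]
    norm_num
  change (2 ^ ((1:ℝ)/6) * s * (1 - s ^ 6) ^ ((1:ℝ)/6) * Real.sqrt (3 + R s)
    / ((1 + 32 * s ^ 6 * (1 - s ^ 6)) ^ ((1:ℝ)/4) * (1 + R s) ^ ((1:ℝ)/6))) ^ 6 = _
  rw [div_pow, mul_pow, mul_pow, mul_pow, mul_pow, root6 (by norm_num), root6 hc, e₁, e₂,
    root6 (by linarith), P, div_eq_div_iff (by positivity) (by positivity)]
  linear_combination (-(R s + 3) ^ 3 * R s ^ 3) * hR₂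

lemma y_eq_P_R_rpow : y s = P (R s) ^ (6⁻¹ : ℝ) := by
  rw [← y_pow_six hs]
  exact_mod_cast (pow_rpow_inv_natCast (y_nonneg hs) (n := 6) (by norm_num)).symm

lemma y_mem_Icc : y s ∈ Icc 0 1 := by
  have hP := P_mem_Icc (one_le_R hs) (R_le_three hs)
  rw [y_eq_P_R_rpow hs]
  exact ⟨rpow_nonneg hP.1 _, rpow_le_one hP.1 hP.2 (by norm_num)⟩

end y

lemma continuousOn_y : ContinuousOn y (Icc 0 1) := by
  have hR : ContinuousOn R (Icc 0 1) := by unfold R; fun_prop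
  have hR₀ : ∀ s ∈ Icc (0:ℝ) 1, R s ≠ 0 := fun s hs => by linarith [one_le_R hs]
  have hPR : ContinuousOn (fun s => P (R s)) (Icc 0 1) := by
    unfold P
    exact ((hR.sub continuousOn_const).mul ((hR.add continuousOn_const).pow 3)).div
      (continuousOn_const.mul (hR.pow 3)) fun s hs => by have := hR₀ s hs; positivity
  exact (hPR.rpow_const fun _ _ => Or.inr (by norm_num)).congr fun s hs => y_eq_P_R_rpow hs

lemma y_zero : y 0 = 0 := by simp [y]

lemma sStar_pow_six : sStar ^ 6 = 2⁻¹ := by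
  exact_mod_cast rpow_inv_natCast_pow (x := (2⁻¹ : ℝ)) (n := 6) (by norm_num) (by norm_num)

lemma sStar_pos : 0 < sStar := rpow_pos_of_pos (by norm_num) _

lemma sStar_lt_one : sStar < 1 := rpow_lt_one (by norm_num) (by norm_num) (by norm_num)

lemma sStar_mem_Icc : sStar ∈ Icc (0:ℝ) 1 := ⟨sStar_pos.le, sStar_lt_one.le⟩

lemma y_sStar : y sStar = 1 := by
  have hR : R sStar = 3 := by
    rw [R, sStar_pow_six, show (1:ℝ) + 32 * 2⁻¹ * (1 - 2⁻¹) = 3 ^ 2 by norm_num]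
    exact sqrt_sq (by norm_num)
  rw [y_eq_P_R_rpow sStar_mem_Icc, hR, P]
  norm_num

lemma mem_Icc_of_mem_Ioo_sStar {x : ℝ} (hx : x ∈ Ioo 0 sStar) : x ∈ Icc (0:ℝ) 1 :=
  ⟨hx.1.le, hx.2.le.trans sStar_lt_one.le⟩

lemma two_mul_pow_six_lt_one {x : ℝ} (hx : x ∈ Ioo 0 sStar) : 2 * x ^ 6 < 1 := by
  have := pow_lt_pow_left₀ hx.2 hx.1.le (by norm_num : 6 ≠ 0)
  rw [sStar_pow_six] at this
  linarith

lemma P_R_mem_Ioo {x : ℝ} (hx : x ∈ Ioo 0 sStar) : P (R x) ∈ Ioo 0 1 := by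
  have hxI := mem_Icc_of_mem_Ioo_sStar hx
  have hu : 0 < x ^ 6 := pow_pos hx.1 6
  have hv := two_mul_pow_six_lt_one hx
  have hR₂ := R_sq hxI
  have hR₁ := one_le_R hxI
  exact P_mem_Ioo (by nlinarith) (by nlinarith)

lemma G656_y_deriv_identity {x : ℝ} (hx : x ∈ Ioo 0 sStar) :
    (1 - P (R x)) ^ (-(5/6) : ℝ) * ((9 - R x ^ 2) ^ 2 / (16 * R x ^ 4)
      * (96 * x ^ 5 * (1 - 2 * x ^ 6) / R x) * (6 : ℝ)⁻¹ * P (R x) ^ ((6 : ℝ)⁻¹ - 1))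
      = 2 * (1 - x ^ 6) ^ (-(5/6) : ℝ) := by
  have hxI := mem_Icc_of_mem_Ioo_sStar hx
  have hx₀ := hx.1
  have hu : 0 < x ^ 6 := pow_pos hx.1 6
  have hv : 0 < 1 - 2 * x ^ 6 := by linarith [two_mul_pow_six_lt_one hx]
  have hR₂ := R_sq hxI
  have hR₀ : 0 < R x := by linarith [one_le_R hxI]
  have hP := P_R_mem_Ioo hx
  have hw : 0 < 2 * x * (1 - 2 * x ^ 6) / R x := by positivity
  have h9 : 9 - R x ^ 2 = 8 * (1 - 2 * x ^ 6) ^ 2 := by rw [hR₂]; ring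
  have hprod :
      P (R x) * (1 - P (R x)) = (2 * x * (1 - 2 * x ^ 6) / R x) ^ 6 * (1 - x ^ 6) := by
    rw [P_mul_one_sub_P hR₀.ne', h9, hR₂]
    field_simp
    ring
  have h56 : ∀ {w : ℝ}, 0 ≤ w → (w ^ 6) ^ (-(5/6) : ℝ) = (w ^ 5)⁻¹ := fun hw => by
    rw [rpow_neg (by positivity), ← rpow_natCast, ← rpow_mul hw]
    norm_num
  have hkey : (1 - P (R x)) ^ (-(5/6) : ℝ) * P (R x) ^ (-(5/6) : ℝ)
      = ((2 * x * (1 - 2 * x ^ 6) / R x) ^ 5)⁻¹ * (1 - x ^ 6) ^ (-(5/6) : ℝ) := by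
    rw [← mul_rpow (sub_nonneg.2 hP.2.le) hP.1.le, mul_comm, hprod,
      mul_rpow (by positivity) (one_sub_pow_six_nonneg hxI), h56 hw.le]
  rw [show (6:ℝ)⁻¹ - 1 = -(5/6) by norm_num]
  calc _ = ((1 - P (R x)) ^ (-(5/6) : ℝ) * P (R x) ^ (-(5/6) : ℝ))
        * ((9 - R x ^ 2) ^ 2 / (16 * R x ^ 4) * (96 * x ^ 5 * (1 - 2 * x ^ 6) / R x) / 6) := by
        ring
    _ = _ := by
      rw [hkey, h9]
      field_simp
      ring

lemma hasDerivAt_G656_y {x : ℝ} (hx : x ∈ Ioo 0 sStar) :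
    HasDerivAt (fun t => G656 (y t)) (2 * (1 - x ^ 6) ^ (-(5/6) : ℝ)) x := by
  have hxI := mem_Icc_of_mem_Ioo_sStar hx
  have hP := P_R_mem_Ioo hx
  have hPR := (hasDerivAt_P (by linarith [one_le_R hxI])).comp x (hasDerivAt_R hxI)
  have h := hPR.genArcsin_rpow_inv (q := 6) (a := 5/6) (by norm_num) hP.1 hP.2
  rw [Nat.cast_ofNat, Function.comp_apply, G656_y_deriv_identity hx] at h
  refine h.congr_of_eventuallyEq ?_
  filter_upwards [Icc_mem_nhds hx.1 (hx.2.trans sStar_lt_one)] with t ht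
  rw [y_eq_P_R_rpow ht]
  rfl

lemma G656_y_eq_two_mul {s : ℝ} (hs₀ : 0 ≤ s) (hs : s ≤ sStar) :
    G656 (y s) = 2 * G656 s := by
  rcases hs₀.eq_or_lt with rfl | hs₀
  · simp [y_zero, G656_zero]
  have hs₁ : s < 1 := hs.trans_lt sStar_lt_one
  have hsub : Icc 0 s ⊆ Icc 0 1 := Icc_subset_Icc_right hs₁.le
  have hΦ : ContinuousOn (fun t => G656 (y t) - 2 * G656 t) (Icc 0 s) :=
    (continuousOn_G656.comp (continuousOn_y.mono hsub) fun t ht => y_mem_Icc (hsub ht)).sub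
      (continuousOn_const.mul (continuousOn_G656.mono hsub))
  have hΦ' : ∀ t ∈ Ioo 0 s, HasDerivAt (fun t => G656 (y t) - 2 * G656 t) 0 t := fun t ht => by
    have hG :=
      hasDerivAt_genArcsin (q := 6) (a := 5/6) (by norm_num) ⟨ht.1.le, ht.2.trans hs₁⟩
    exact ((hasDerivAt_G656_y ⟨ht.1, ht.2.trans_le hs⟩).sub (hG.const_mul 2)).congr_deriv
      (sub_self _)
  obtain ⟨c, -, hc⟩ := exists_hasDerivAt_eq_slope _ (fun _ => 0) hs₀ hΦ hΦ'
  simp only [y_zero, G656_zero, mul_zero, sub_zero, sub_self] at hc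
  linarith [(div_eq_zero_iff.1 hc.symm).resolve_right hs₀.ne']

end SinSixFifthsSix

/-- The double-angle formula for `sin_{6/5,6}`. -/
theorem double_angle_sin_six_fifths_six (s : ℝ) (hs : s ∈ Set.Icc (0:ℝ) 1)
    (h : 2 * G656 s ≤ G656 1) :
    (2 ^ ((1:ℝ)/6) * s * (1 - s ^ 6) ^ ((1:ℝ)/6)
        * Real.sqrt (3 + Real.sqrt (1 + 32 * s ^ 6 * (1 - s ^ 6)))
        / ((1 + 32 * s ^ 6 * (1 - s ^ 6)) ^ ((1:ℝ)/4)
          * (1 + Real.sqrt (1 + 32 * s ^ 6 * (1 - s ^ 6))) ^ ((1:ℝ)/6)))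
      ∈ Set.Icc (0:ℝ) 1 ∧
    G656 (2 ^ ((1:ℝ)/6) * s * (1 - s ^ 6) ^ ((1:ℝ)/6)
        * Real.sqrt (3 + Real.sqrt (1 + 32 * s ^ 6 * (1 - s ^ 6)))
        / ((1 + 32 * s ^ 6 * (1 - s ^ 6)) ^ ((1:ℝ)/4)
          * (1 + Real.sqrt (1 + 32 * s ^ 6 * (1 - s ^ 6))) ^ ((1:ℝ)/6)))
      = 2 * G656 s := by
  open SinSixFifthsSix in
  change y s ∈ Icc 0 1 ∧ G656 (y s) = 2 * G656 s
  have hG1 : G656 1 = 2 * G656 sStar := by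
    simpa [y_sStar] using G656_y_eq_two_mul sStar_pos.le le_rfl
  have hle : s ≤ sStar := (strictMonoOn_G656.le_iff_le hs sStar_mem_Icc).1 (by linarith)
  exact ⟨y_mem_Icc hs, G656_y_eq_two_mul hs.1 hle⟩
end

section
/- Let 1 < q < ∞ and q* := q/(q−1). For every s ∈ [0,1], set y := 2^{2/q} · s · (1−s^q)^{1/q} (note y ∈ [0,1] since y^q = 4 s^q (1−s^q) ≤ 1). If 2^{2/q} F_{q*,q}(s) ≤ F_{2,q}(1), then F_{2,q}(y) = 2^{2/q} F_{q*,q}(s); if 2^{2/q} F_{q*,q}(s) ≥ F_{2,q}(1), then F_{2,q}(y) = 2 F_{2,q}(1) − 2^{2/q} F_{q*,q}(s). (This is the multiple-angle formula sin_{2,q}(2^{2/q} x) = 2^{2/q} sin_{q*,q}x cos_{q*,q}^{q*−1}x for x ∈ [0, π_{q*,q}/2].) -/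
/-!
Put `y(s) = 2^{2/q} s (1 - s^q)^{1/q}`. Then `y^q = 1 - (1 - 2 s^q)^2`, so along `y` the integrand
`(1 - y^q)^{-1/2}` of `F_{2,q}` equals `|1 - 2 s^q|⁻¹`, while
`y'(s) = 2^{2/q} (1 - 2 s^q) (1 - s^q)^{1/q - 1}` and `(1 - s^q)^{1/q - 1}` is the integrand of
`F_{q*,q}`. The substitution `u = y(s)` therefore turns `F_{2,q}` into `2^{2/q} F_{q*,q}` up to the
sign of `1 - 2 s^q`. The map `y` increases from `0` to `1` on `[0, s₀]`, `s₀ = 2^{-1/q}`, which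
gives the first formula and `F_{2,q}(1) = 2^{2/q} F_{q*,q}(s₀)`, and decreases on `[s₀, 1]`, which
gives the second. Since `F_{q*,q}` is monotone, the hypotheses of the two cases decide on which side
of `s₀` the point `s` lies.
-/

/-- `Fpq p q x = ∫₀ˣ (1−t^q)^{−1/p} dt`, the inverse of the generalized sine `sin_{p,q}`. -/
noncomputable def Fpq (p q x : ℝ) : ℝ := ∫ t in (0:ℝ)..x, (1 - t ^ q) ^ (-(1/p))

open Real MeasureTheory Set intervalIntegral

lemma intervalIntegrable_one_sub_rpow_rpow {q r : ℝ} (hq : 1 ≤ q) (hr : -1 < r) (hr0 : r ≤ 0) :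
    IntervalIntegrable (fun t : ℝ => (1 - t ^ q) ^ r) volume 0 1 := by
  have hmaj : IntervalIntegrable (fun t : ℝ => (1 - t) ^ r) volume 0 1 := by
    simpa using ((intervalIntegrable_rpow' (a := 0) (b := 1) hr).comp_sub_left 1).symm
  have hmeas : Measurable fun t : ℝ => (1 - t ^ q) ^ r := by fun_prop
  refine hmaj.mono_fun hmeas.aestronglyMeasurable ?_
  rw [uIoc_of_le zero_le_one]
  filter_upwards [ae_restrict_mem measurableSet_Ioc] with t ⟨ht0, ht1⟩
  have htq : t ^ q ≤ t := rpow_le_self_of_le_one ht0.le ht1 hq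
  rw [norm_of_nonneg (rpow_nonneg (by linarith) r), norm_of_nonneg (rpow_nonneg (by linarith) r)]
  rcases ht1.lt_or_eq with ht1 | rfl
  · exact rpow_le_rpow_of_nonpos (sub_pos.2 ht1) (by linarith) hr0
  · simp

section Fpq

variable {p q : ℝ}

lemma intervalIntegrable_Fpq_integrand (hp : 1 < p) (hq : 1 ≤ q) {a b : ℝ}
    (ha : a ∈ Icc (0:ℝ) 1) (hb : b ∈ Icc (0:ℝ) 1) :
    IntervalIntegrable (fun t : ℝ => (1 - t ^ q) ^ (-(1/p))) volume a b := by
  have hp' : 0 < 1 / p := by positivity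
  have := intervalIntegrable_one_sub_rpow_rpow hq (r := -(1/p))
    (by rw [neg_lt_neg_iff, div_lt_one (by linarith)]; exact hp) (by linarith)
  exact this.mono_set (by rw [uIcc_of_le zero_le_one]; exact uIcc_subset_Icc ha hb)

lemma Fpq_sub_Fpq (hp : 1 < p) (hq : 1 ≤ q) {a b : ℝ} (ha : a ∈ Icc (0:ℝ) 1)
    (hb : b ∈ Icc (0:ℝ) 1) :
    Fpq p q b - Fpq p q a = ∫ t in a..b, (1 - t ^ q) ^ (-(1/p)) :=
  integral_interval_sub_left (intervalIntegrable_Fpq_integrand hp hq (by simp) hb)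
    (intervalIntegrable_Fpq_integrand hp hq (by simp) ha)

lemma monotoneOn_Fpq (hp : 1 < p) (hq : 1 ≤ q) : MonotoneOn (Fpq p q) (Icc 0 1) := by
  intro a ha b hb hab
  rw [← sub_nonneg, Fpq_sub_Fpq hp hq ha hb]
  refine integral_nonneg hab fun t ht => rpow_nonneg ?_ _
  have : t ^ q ≤ 1 := rpow_le_one (ha.1.trans ht.1) (ht.2.trans hb.2) (by linarith)
  linarith

lemma neg_one_div_conjExponent (hq : 1 < q) : -(1 / (q / (q - 1))) = 1/q - 1 := by
  have : q - 1 ≠ 0 := by linarith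
  field_simp
  ring

end Fpq

noncomputable def multipleAngleMap (q t : ℝ) : ℝ := 2 ^ ((2:ℝ)/q) * t * (1 - t ^ q) ^ (1/q)

noncomputable def peakPoint (q : ℝ) : ℝ := (2:ℝ)⁻¹ ^ (1/q)

section multipleAngleMap

variable {q : ℝ}

lemma two_rpow_two_div_rpow (hq : q ≠ 0) : ((2:ℝ) ^ ((2:ℝ)/q)) ^ q = 4 := by
  rw [← rpow_mul zero_le_two, div_mul_cancel₀ _ hq]; norm_num

lemma multipleAngleMap_nonneg (hq : 0 ≤ q) {t : ℝ} (ht : t ∈ Icc (0:ℝ) 1) :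
    0 ≤ multipleAngleMap q t :=
  mul_nonneg (mul_nonneg (by positivity) ht.1)
    (rpow_nonneg (sub_nonneg.2 (rpow_le_one ht.1 ht.2 hq)) _)

lemma multipleAngleMap_rpow (hq : 0 < q) {t : ℝ} (ht : t ∈ Icc (0:ℝ) 1) :
    multipleAngleMap q t ^ q = 1 - (1 - 2 * t ^ q) ^ 2 := by
  have hu : 0 ≤ 1 - t ^ q := sub_nonneg.2 (rpow_le_one ht.1 ht.2 hq.le)
  rw [multipleAngleMap, mul_rpow (mul_nonneg (by positivity) ht.1) (rpow_nonneg hu _),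
    mul_rpow (by positivity) ht.1,
    ← rpow_mul hu, one_div_mul_cancel hq.ne', rpow_one, two_rpow_two_div_rpow hq.ne']
  ring

lemma multipleAngleMap_le_one (hq : 0 < q) {t : ℝ} (ht : t ∈ Icc (0:ℝ) 1) :
    multipleAngleMap q t ≤ 1 := by
  rw [← rpow_le_rpow_iff (multipleAngleMap_nonneg hq.le ht) zero_le_one hq, one_rpow,
    multipleAngleMap_rpow hq ht]
  nlinarith [sq_nonneg (1 - 2 * t ^ q)]

lemma continuous_multipleAngleMap (hq : 0 < q) : Continuous (multipleAngleMap q) := by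
  have := continuous_rpow_const hq.le
  have := continuous_rpow_const (one_div_pos.2 hq).le
  unfold multipleAngleMap
  fun_prop

lemma multipleAngleMap_zero : multipleAngleMap q 0 = 0 := by
  simp [multipleAngleMap]

lemma peakPoint_rpow (hq : q ≠ 0) : peakPoint q ^ q = 2⁻¹ := by
  rw [peakPoint, ← rpow_mul (by norm_num), one_div_mul_cancel hq, rpow_one]

lemma peakPoint_mem_Icc (hq : 0 < q) : peakPoint q ∈ Icc (0:ℝ) 1 :=
  ⟨by unfold peakPoint; positivity, rpow_le_one (by norm_num) (by norm_num) (by positivity)⟩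

lemma multipleAngleMap_peakPoint (hq : 0 < q) : multipleAngleMap q (peakPoint q) = 1 := by
  rw [← rpow_left_inj (multipleAngleMap_nonneg hq.le (peakPoint_mem_Icc hq)) zero_le_one hq.ne',
    multipleAngleMap_rpow hq (peakPoint_mem_Icc hq), peakPoint_rpow hq.ne']
  norm_num

lemma hasDerivAt_multipleAngleMap (hq : 0 < q) {t : ℝ} (ht : t ∈ Ioo (0:ℝ) 1) :
    HasDerivAt (multipleAngleMap q)
      (2 ^ ((2:ℝ)/q) * (1 - 2 * t ^ q) * (1 - t ^ q) ^ (1/q - 1)) t := by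
  have hu : 0 < 1 - t ^ q := sub_pos.2 (rpow_lt_one ht.1.le ht.2 hq)
  have hroot := ((hasDerivAt_rpow_const (p := q) (Or.inl ht.1.ne')).const_sub 1).rpow_const
    (p := 1/q) (Or.inl hu.ne')
  refine (((hasDerivAt_id t).const_mul (2 ^ ((2:ℝ)/q))).mul hroot).congr_deriv ?_
  rw [id, rpow_sub_one hu.ne', rpow_sub_one ht.1.ne']
  field_simp [ht.1.ne']
  ring

lemma rpow_neg_half_one_sub_multipleAngleMap_rpow (hq : 0 < q) {t : ℝ} (ht : t ∈ Icc (0:ℝ) 1) :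
    (1 - multipleAngleMap q t ^ q) ^ (-(1/2:ℝ)) = |1 - 2 * t ^ q|⁻¹ := by
  rw [multipleAngleMap_rpow hq ht, sub_sub_cancel, rpow_neg (sq_nonneg _), ← sqrt_eq_rpow,
    sqrt_sq_eq_abs]

lemma rpow_lt_inv_two_iff (hq : 0 < q) {t : ℝ} (ht : 0 ≤ t) : t ^ q < 2⁻¹ ↔ t < peakPoint q := by
  rw [← peakPoint_rpow hq.ne', rpow_lt_rpow_iff ht (peakPoint_mem_Icc hq).1 hq]

lemma inv_two_lt_rpow_iff (hq : 0 < q) {t : ℝ} (ht : 0 ≤ t) : 2⁻¹ < t ^ q ↔ peakPoint q < t := by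
  rw [← peakPoint_rpow hq.ne', rpow_lt_rpow_iff (peakPoint_mem_Icc hq).1 ht hq]

end multipleAngleMap

section multipleAngleFormula

variable {q : ℝ}

lemma Fpq_two_multipleAngleMap_of_le (hq : 1 < q) {s : ℝ} (hs0 : 0 ≤ s) (hs : s ≤ peakPoint q) :
    Fpq 2 q (multipleAngleMap q s) = 2 ^ ((2:ℝ)/q) * Fpq (q / (q - 1)) q s := by
  have hq0 : 0 < q := by linarith
  have hmem : ∀ t ∈ Ioo 0 s, t ∈ Ioo (0:ℝ) 1 ∧ 0 < 1 - 2 * t ^ q := fun t ht =>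
    have htp : t < peakPoint q := ht.2.trans_le hs
    ⟨⟨ht.1, htp.trans_le (peakPoint_mem_Icc hq0).2⟩,
      by linarith [(rpow_lt_inv_two_iff hq0 ht.1.le).2 htp]⟩
  have hsubst := integral_Icc_deriv_smul_of_deriv_nonneg (g := fun u => (1 - u ^ q) ^ (-(1/2:ℝ)))
    (continuous_multipleAngleMap hq0).continuousOn
    (fun t ht => hasDerivAt_multipleAngleMap hq0 (hmem t ht).1)
    (fun t ht => mul_nonneg (mul_nonneg (by positivity) (hmem t ht).2.le)
      (rpow_nonneg (sub_pos.2 (rpow_lt_one (hmem t ht).1.1.le (hmem t ht).1.2 hq0)).le _)) hs0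
  have hys : 0 ≤ multipleAngleMap q s :=
    multipleAngleMap_nonneg hq0.le ⟨hs0, hs.trans (peakPoint_mem_Icc hq0).2⟩
  rw [multipleAngleMap_zero, integral_Icc_eq_integral_Ioc, integral_Icc_eq_integral_Ioc,
    ← integral_of_le hs0, ← integral_of_le hys] at hsubst
  rw [Fpq, Fpq, ← hsubst, neg_one_div_conjExponent hq, ← intervalIntegral.integral_const_mul]
  refine integral_congr_Ioo_of_le hs0 fun t ht => ?_
  obtain ⟨ht01, hw⟩ := hmem t ht
  rw [smul_eq_mul, rpow_neg_half_one_sub_multipleAngleMap_rpow hq0 ⟨ht01.1.le, ht01.2.le⟩,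
    abs_of_pos hw]
  field_simp

lemma Fpq_two_one (hq : 1 < q) :
    Fpq 2 q 1 = 2 ^ ((2:ℝ)/q) * Fpq (q / (q - 1)) q (peakPoint q) := by
  have hq0 : 0 < q := by linarith
  rw [← Fpq_two_multipleAngleMap_of_le hq (peakPoint_mem_Icc hq0).1 le_rfl,
    multipleAngleMap_peakPoint hq0]

lemma Fpq_two_multipleAngleMap_of_ge (hq : 1 < q) {s : ℝ} (hs : peakPoint q ≤ s) (hs1 : s ≤ 1) :
    Fpq 2 q (multipleAngleMap q s) = 2 * Fpq 2 q 1 - 2 ^ ((2:ℝ)/q) * Fpq (q / (q - 1)) q s := by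
  have hq0 : 0 < q := by linarith
  have hp : 0 ≤ peakPoint q := (peakPoint_mem_Icc hq0).1
  have hmem : ∀ t ∈ Ioo (peakPoint q) s, t ∈ Ioo (0:ℝ) 1 ∧ 1 - 2 * t ^ q < 0 := fun t ht =>
    ⟨⟨hp.trans_lt ht.1, ht.2.trans_le hs1⟩,
      by linarith [(inv_two_lt_rpow_iff hq0 (hp.trans ht.1.le)).2 ht.1]⟩
  have hsubst := integral_Icc_deriv_smul_of_deriv_nonpos (g := fun u => (1 - u ^ q) ^ (-(1/2:ℝ)))
    (continuous_multipleAngleMap hq0).continuousOn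
    (fun t ht => hasDerivAt_multipleAngleMap hq0 (hmem t ht).1)
    (fun t ht => mul_nonpos_of_nonpos_of_nonneg
      (mul_nonpos_of_nonneg_of_nonpos (by positivity) (hmem t ht).2.le)
      (rpow_nonneg (sub_pos.2 (rpow_lt_one (hmem t ht).1.1.le (hmem t ht).1.2 hq0)).le _)) hs
  have hs' : s ∈ Icc (0:ℝ) 1 := ⟨hp.trans hs, hs1⟩
  have hys : multipleAngleMap q s ∈ Icc (0:ℝ) 1 :=
    ⟨multipleAngleMap_nonneg hq0.le hs', multipleAngleMap_le_one hq0 hs'⟩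
  rw [multipleAngleMap_peakPoint hq0, integral_Icc_eq_integral_Ioc, integral_Icc_eq_integral_Ioc,
    ← integral_of_le hs, ← integral_of_le hys.2,
    ← Fpq_sub_Fpq one_lt_two hq.le hys (by simp)] at hsubst
  have hcongr : ∫ t in (peakPoint q)..s,
        (2 ^ ((2:ℝ)/q) * (1 - 2 * t ^ q) * (1 - t ^ q) ^ (1/q - 1)) •
          (1 - multipleAngleMap q t ^ q) ^ (-(1/2:ℝ))
      = -(2 ^ ((2:ℝ)/q) * (Fpq (q / (q - 1)) q s - Fpq (q / (q - 1)) q (peakPoint q))) := by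
    rw [Fpq_sub_Fpq (p := q / (q - 1)) (HolderConjugate.conjExponent hq).symm.lt hq.le
        (peakPoint_mem_Icc hq0) hs', neg_one_div_conjExponent hq,
      ← intervalIntegral.integral_const_mul, ← intervalIntegral.integral_neg]
    refine integral_congr_Ioo_of_le hs fun t ht => ?_
    obtain ⟨ht01, hw⟩ := hmem t ht
    rw [smul_eq_mul, rpow_neg_half_one_sub_multipleAngleMap_rpow hq0 ⟨ht01.1.le, ht01.2.le⟩,
      abs_of_neg hw]
    field_simp [hw.ne]
  linarith [Fpq_two_one hq]

end multipleAngleFormula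

/-- The multiple-angle formula `sin_{2,q}(2^{2/q} x) = 2^{2/q} sin_{q*,q} x cos_{q*,q}^{q*−1} x`. -/
theorem multiple_angle_formula (q : ℝ) (hq : 1 < q) (s : ℝ) (hs : s ∈ Set.Icc (0:ℝ) 1) :
    (2 ^ ((2:ℝ)/q) * s * (1 - s ^ q) ^ (1/q)) ∈ Set.Icc (0:ℝ) 1 ∧
    (2 ^ ((2:ℝ)/q) * Fpq (q / (q - 1)) q s ≤ Fpq 2 q 1 →
      Fpq 2 q (2 ^ ((2:ℝ)/q) * s * (1 - s ^ q) ^ (1/q))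
        = 2 ^ ((2:ℝ)/q) * Fpq (q / (q - 1)) q s) ∧
    (Fpq 2 q 1 ≤ 2 ^ ((2:ℝ)/q) * Fpq (q / (q - 1)) q s →
      Fpq 2 q (2 ^ ((2:ℝ)/q) * s * (1 - s ^ q) ^ (1/q))
        = 2 * Fpq 2 q 1 - 2 ^ ((2:ℝ)/q) * Fpq (q / (q - 1)) q s) := by
  have hq0 : 0 < q := by linarith
  have hy : 2 ^ ((2:ℝ)/q) * s * (1 - s ^ q) ^ (1/q) = multipleAngleMap q s := rfl
  have hpeak := peakPoint_mem_Icc hq0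
  have hmono := monotoneOn_Fpq (p := q / (q - 1)) (HolderConjugate.conjExponent hq).symm.lt hq.le
  have hc : (0:ℝ) ≤ 2 ^ ((2:ℝ)/q) := by positivity
  rw [hy]
  refine ⟨⟨multipleAngleMap_nonneg hq0.le hs, multipleAngleMap_le_one hq0 hs⟩,
    fun h => ?_, fun h => ?_⟩
  -- On the side of the peak not matching `h`, monotonicity forces
  -- `2^{2/q} F_{q*,q}(s) = F_{2,q}(1)`, where the two formulas agree.
  all_goals rcases le_total s (peakPoint q) with hsp | hps
  · exact Fpq_two_multipleAngleMap_of_le hq hs.1 hsp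
  · have := mul_le_mul_of_nonneg_left (hmono hpeak hs hps) hc
    rw [Fpq_two_multipleAngleMap_of_ge hq hps hs.2]
    linarith [Fpq_two_one hq]
  · have := mul_le_mul_of_nonneg_left (hmono hs hpeak hsp) hc
    rw [Fpq_two_multipleAngleMap_of_le hq hs.1 hsp]
    linarith [Fpq_two_one hq]
  · exact Fpq_two_multipleAngleMap_of_ge hq hps hs.2
end

section
/- Let 1 < p, q < ∞, p* := p/(p−1) and q* := q/(q−1). Then q · ∫₀¹ (1−t^q)^{−1/p} dt = p* · ∫₀¹ (1−t^{p*})^{−1/q*} dt. (Equivalently, q π_{p,q} = p* π_{q*,p*}.) -/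
/-!
Substituting `u = t ^ r` turns `r ∫₀¹ (1 - t ^ r) ^ s dt` into the Beta-type integral
`∫₀¹ u ^ (1/r - 1) (1 - u) ^ s du`. For `r = q, s = -1/p` and for `r = p*, s = -1/q*` the exponents
are `(-1/p, 1/q - 1)` and `(1/q - 1, -1/p)`, so the two sides agree after the reflection `u ↦ 1 - u`.
The one-dimensional change of variables formula needs no integrability, so convergence of the
integrals never has to be checked.
-/

open MeasureTheory Set

lemma rpow_image_Ioo_zero_one {r : ℝ} (hr : 0 < r) :
    (fun t : ℝ => t ^ r) '' Ioo 0 1 = Ioo 0 1 := by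
  ext u
  constructor
  · rintro ⟨t, ⟨ht0, ht1⟩, rfl⟩
    exact ⟨Real.rpow_pos_of_pos ht0 r, Real.rpow_lt_one ht0.le ht1 hr⟩
  · rintro ⟨hu0, hu1⟩
    refine ⟨u ^ r⁻¹, ⟨Real.rpow_pos_of_pos hu0 _, Real.rpow_lt_one hu0.le hu1 (inv_pos.2 hr)⟩, ?_⟩
    exact Real.rpow_inv_rpow hu0.le hr.ne'

lemma setIntegral_Ioo_zero_one_eq_comp_rpow {E : Type*} [NormedAddCommGroup E] [NormedSpace ℝ E]
    {r : ℝ} (hr : 0 < r) (f : ℝ → E) :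
    ∫ u in Ioo (0:ℝ) 1, f u = ∫ t in Ioo (0:ℝ) 1, (r * t ^ (r - 1)) • f (t ^ r) := by
  have hderiv : ∀ t ∈ Ioo (0:ℝ) 1, HasDerivWithinAt (fun t => t ^ r) (r * t ^ (r - 1)) (Ioo 0 1) t :=
    fun t ht => (Real.hasDerivAt_rpow_const (Or.inl ht.1.ne')).hasDerivWithinAt
  have hinj : InjOn (fun t : ℝ => t ^ r) (Ioo 0 1) :=
    (Real.strictMonoOn_rpow_Ici_of_exponent_pos hr).injOn.mono fun _ ht => ht.1.le
  have hcov := integral_image_eq_integral_abs_deriv_smul measurableSet_Ioo hderiv hinj f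
  rw [rpow_image_Ioo_zero_one hr] at hcov
  rw [hcov]
  refine setIntegral_congr_fun measurableSet_Ioo fun t ht => ?_
  have : 0 < r * t ^ (r - 1) := mul_pos hr (Real.rpow_pos_of_pos ht.1 _)
  rw [abs_of_pos this]

lemma mul_integral_one_sub_rpow_rpow {r : ℝ} (hr : 0 < r) (s : ℝ) :
    r * ∫ t in (0:ℝ)..1, (1 - t ^ r) ^ s = ∫ u in (0:ℝ)..1, u ^ (1/r - 1) * (1 - u) ^ s := by
  simp only [intervalIntegral.integral_of_le zero_le_one, integral_Ioc_eq_integral_Ioo]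
  rw [setIntegral_Ioo_zero_one_eq_comp_rpow hr (fun u => u ^ (1/r - 1) * (1 - u) ^ s),
    ← integral_const_mul]
  refine setIntegral_congr_fun measurableSet_Ioo fun t ht => ?_
  have hpow : t ^ (r - 1) * (t ^ r) ^ (1/r - 1) = 1 := by
    rw [← Real.rpow_mul ht.1.le, ← Real.rpow_add ht.1,
      show r - 1 + r * (1/r - 1) = 0 by field_simp; ring, Real.rpow_zero]
  simp only [smul_eq_mul]
  linear_combination (-(r * (1 - t ^ r) ^ s)) * hpow

/-- The duality relation `q π_{p,q} = p* π_{q*,p*}` between generalized π's. -/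
theorem q_pi_pq_eq_pstar_pi_qstar_pstar (p q : ℝ) (hp : 1 < p) (hq : 1 < q) :
    q * ∫ t in (0:ℝ)..1, (1 - t ^ q) ^ (-(1/p))
      = (p / (p - 1)) * ∫ t in (0:ℝ)..1, (1 - t ^ (p / (p - 1))) ^ (-(1/(q / (q - 1)))) := by
  have hpstar : 0 < p / (p - 1) := div_pos (by linarith) (by linarith)
  rw [mul_integral_one_sub_rpow_rpow (by linarith) _,
    mul_integral_one_sub_rpow_rpow hpstar _,
    show 1 / (p / (p - 1)) - 1 = -(1/p) by field_simp; ring,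
    show -(1 / (q / (q - 1))) = 1/q - 1 by field_simp; ring]
  simpa [mul_comm] using (intervalIntegral.integral_comp_sub_left (a := 0) (b := 1)
    (fun u => u ^ (1/q - 1) * (1 - u) ^ (-(1/p))) (1:ℝ)).symm
end

section
/- Let 1 < p, q < ∞, p* := p/(p−1) and q* := q/(q−1). For all s, t ∈ [0,1] with s^q + t^{p*} = 1, one has ∫₀ᵗ (1−u^{p*})^{−1/q*} du + (q/p*) · ∫₀ˢ (1−u^q)^{−1/p} du = ∫₀¹ (1−u^{p*})^{−1/q*} du. (This is the duality formula sin_{p,q}(π_{p,q} x/2) = cos_{q*,p*}^{q*−1}(π_{q*,p*}(1−x)/2) expressed in terms of the integrals F_{p,q} and F_{q*,p*}.) -/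
/-!
Write `P = p / (p - 1)`, so that `-1 / (q / (q - 1)) = 1 / q - 1` and `-1 / p = 1 / P - 1`.
The substitution `u = (1 - v ^ q) ^ (1 / P)` maps `(0, s)` decreasingly onto `(t, 1)` and turns
`(1 - u ^ P) ^ (1 / q - 1) du` into `(q / P) (1 - v ^ q) ^ (1 / P - 1) dv`, so the second summand
is the integral of the first integrand over `[t, 1]`; additivity over `[0, t] ∪ [t, 1]` concludes.
-/

open Real Set MeasureTheory intervalIntegral

section

variable {a b c : ℝ}

lemma intervalIntegrable_one_sub_rpow_rpow_s5 (hb : 1 ≤ b) (hc : -1 < c) (hc0 : c ≤ 0) :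
    IntervalIntegrable (fun u : ℝ => (1 - u ^ b) ^ c) volume 0 1 := by
  have hdom : IntervalIntegrable (fun u : ℝ => (1 - u) ^ c) volume 0 1 := by
    simpa using ((intervalIntegrable_rpow' (a := 0) (b := 1) hc).comp_sub_left 1).symm
  rw [intervalIntegrable_iff_integrableOn_Ioo_of_le zero_le_one] at hdom ⊢
  refine hdom.mono'
    ((measurable_const.sub (measurable_id.pow_const b)).pow_const c).aestronglyMeasurable
    ((ae_restrict_iff' measurableSet_Ioo).2 (ae_of_all _ ?_))
  rintro u ⟨hu0, hu1⟩
  -- `c ≤ 0` reverses the comparison `1 - u ≤ 1 - u ^ b` of the bases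
  have hub : u ^ b ≤ u := by
    simpa using rpow_le_rpow_of_exponent_ge hu0 hu1.le hb
  rw [norm_of_nonneg (rpow_nonneg (by linarith) _)]
  exact rpow_le_rpow_of_nonpos (by linarith) (by linarith) hc0

lemma strictAntiOn_one_sub_rpow_rpow (ha : 0 < a) (hc : 0 < c) :
    StrictAntiOn (fun v : ℝ => (1 - v ^ a) ^ c) (Icc 0 1) := by
  intro v hv w hw hvw
  have hwa : w ^ a ≤ 1 := rpow_le_one hw.1 hw.2 ha.le
  have := rpow_lt_rpow hv.1 hvw ha
  exact rpow_lt_rpow (by linarith) (by linarith) hc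

lemma continuousOn_one_sub_rpow_rpow (ha : 0 < a) (hc : 0 < c) :
    ContinuousOn (fun v : ℝ => (1 - v ^ a) ^ c) (Icc 0 1) :=
  ((continuousOn_const.sub (continuousOn_id.rpow_const fun _ _ => Or.inr ha.le)).rpow_const
    fun _ _ => Or.inr hc.le)

lemma hasDerivAt_one_sub_rpow_rpow {v : ℝ} (hv0 : 0 < v) (hv1 : v ^ a < 1) :
    HasDerivAt (fun v : ℝ => (1 - v ^ a) ^ c)
      (-(c * (1 - v ^ a) ^ (c - 1) * (a * v ^ (a - 1)))) v := by
  have := ((hasDerivAt_rpow_const (p := a) (Or.inl hv0.ne')).const_sub 1).rpow_const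
    (p := c) (Or.inl (sub_pos.2 hv1).ne')
  convert this using 1
  ring

theorem integral_one_sub_rpow_rpow_eq_mul_integral (ha : 0 < a) (hb : 0 < b) {s t : ℝ}
    (hs : 0 ≤ s) (ht : 0 ≤ t) (hst : s ^ a + t ^ b = 1) :
    ∫ u in t..1, (1 - u ^ b) ^ (a⁻¹ - 1) = a / b * ∫ v in 0..s, (1 - v ^ a) ^ (b⁻¹ - 1) := by
  set φ : ℝ → ℝ := fun v => (1 - v ^ a) ^ b⁻¹
  have hs1 : s ≤ 1 := (rpow_le_rpow_iff hs zero_le_one ha).1 <| by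
    rw [one_rpow]; linarith [rpow_nonneg ht b]
  have ht1 : t ≤ 1 := (rpow_le_rpow_iff ht zero_le_one hb).1 <| by
    rw [one_rpow]; linarith [rpow_nonneg hs a]
  have hφs : φ s = t := by
    simp only [φ, ← hst, add_sub_cancel_left, rpow_rpow_inv ht hb.ne']
  have hφ0 : φ 0 = 1 := by simp [φ, zero_rpow ha.ne']
  have himage : φ '' Ioo 0 s = Ioo t 1 := by
    rw [← hφs, ← hφ0]
    exact ContinuousOn.image_Ioo_of_strictAntiOn hs
      ((continuousOn_one_sub_rpow_rpow ha (inv_pos.2 hb)).mono (Icc_subset_Icc_right hs1))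
      ((strictAntiOn_one_sub_rpow_rpow ha (inv_pos.2 hb)).mono (Icc_subset_Icc_right hs1))
  have hbounds : ∀ v ∈ Ioo 0 s, 0 < v ∧ v ^ a < 1 := fun v hv =>
    ⟨hv.1, rpow_lt_one hv.1.le (hv.2.trans_le hs1) ha⟩
  have hderiv : ∀ v ∈ Ioo 0 s, HasDerivWithinAt φ
      (-(b⁻¹ * (1 - v ^ a) ^ (b⁻¹ - 1) * (a * v ^ (a - 1)))) (Ioo 0 s) v := fun v hv =>
    (hasDerivAt_one_sub_rpow_rpow (hbounds v hv).1 (hbounds v hv).2).hasDerivWithinAt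
  -- after the substitution `u = φ v` the factors `v ^ (a - 1)` and `v ^ (1 - a)` cancel
  have hintegrand : ∀ v ∈ Ioo 0 s,
      (-(-(b⁻¹ * (1 - v ^ a) ^ (b⁻¹ - 1) * (a * v ^ (a - 1))))) • (1 - φ v ^ b) ^ (a⁻¹ - 1)
        = a / b * (1 - v ^ a) ^ (b⁻¹ - 1) := by
    intro v hv
    obtain ⟨hv0, hva⟩ := hbounds v hv
    have hcancel : v ^ (a - 1) * v ^ (1 - a) = 1 := by
      rw [← rpow_add hv0]; norm_num
    simp only [φ, smul_eq_mul, neg_neg]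
    rw [rpow_inv_rpow (sub_nonneg.2 hva.le) hb.ne', sub_sub_cancel, ← rpow_mul hv0.le,
      show a * (a⁻¹ - 1) = 1 - a by field_simp]
    calc _ = a / b * (1 - v ^ a) ^ (b⁻¹ - 1) * (v ^ (a - 1) * v ^ (1 - a)) := by ring
      _ = _ := by rw [hcancel, mul_one]
  rw [integral_of_le ht1, integral_of_le hs,
    integral_Ioc_eq_integral_Ioo, integral_Ioc_eq_integral_Ioo, ← himage,
    integral_image_eq_integral_deriv_smul_of_antitoneOn measurableSet_Ioo hderiv
      ((strictAntiOn_one_sub_rpow_rpow ha (inv_pos.2 hb)).mono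
        (Ioo_subset_Icc_self.trans (Icc_subset_Icc_right hs1))).antitoneOn,
    setIntegral_congr_fun measurableSet_Ioo hintegrand, MeasureTheory.integral_const_mul]

end

/-- The duality formula `sin_{p,q}(π_{p,q} x/2) = cos_{q*,p*}^{q*−1}(π_{q*,p*}(1−x)/2)`
expressed in terms of the integrals `F_{p,q}` and `F_{q*,p*}`. -/
theorem duality_formula (p q : ℝ) (hp : 1 < p) (hq : 1 < q)
    (s t : ℝ) (hs : s ∈ Set.Icc (0:ℝ) 1) (ht : t ∈ Set.Icc (0:ℝ) 1)
    (hst : s ^ q + t ^ (p / (p - 1)) = 1) :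
    (∫ u in (0:ℝ)..t, (1 - u ^ (p / (p - 1))) ^ (-(1/(q / (q - 1)))))
      + (q / (p / (p - 1))) * ∫ u in (0:ℝ)..s, (1 - u ^ q) ^ (-(1/p))
      = ∫ u in (0:ℝ)..1, (1 - u ^ (p / (p - 1))) ^ (-(1/(q / (q - 1)))) := by
  set P := p / (p - 1)
  have hP : 1 < P := by rw [lt_div_iff₀ (by linarith)]; linarith
  have hexp_q : -(1 / (q / (q - 1))) = q⁻¹ - 1 := by field_simp; ring
  have hexp_p : -(1 / p) = P⁻¹ - 1 := by rw [inv_div]; field_simp; ring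
  have hint := intervalIntegrable_one_sub_rpow_rpow_s5 hP.le
    (c := q⁻¹ - 1) (by linarith [inv_pos.2 (by linarith : (0:ℝ) < q)])
    (by linarith [inv_lt_one_of_one_lt₀ hq])
  rw [hexp_q, hexp_p, ← integral_one_sub_rpow_rpow_eq_mul_integral (by linarith) (by linarith)
    hs.1 ht.1 hst]
  exact integral_add_adjacent_intervals
    (hint.mono_set (uIcc_subset_uIcc_left (by rwa [uIcc_of_le zero_le_one])))
    (hint.mono_set (uIcc_subset_uIcc_right (by rwa [uIcc_of_le zero_le_one])))
end

section
/- With k² := (2−√3)/4, one has ∫₀¹ (1−t⁶)^{−1/2} dt = 3^{−1/4} · ∫₀¹ ( (1−s²)(1 − k² s²) )^{−1/2} ds. (Equivalently, π_{2,6}/2 = K(k)/3^{1/4}, where K is the complete elliptic integral of the first kind with modulus k.) -/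
/-!
Put `w = √(1 + t² + t⁴)`, `D = 1 + (√3 - 1) t² + w` and `s = Φ(t) = √(2√3) t / √D`.
Since `D (w + 1 - (√3 + 1) t²) = (1 - t²)(2w + 2 + t²)`, one finds
`1 - s² = (w + 1 - (√3 + 1) t²) / D`, `1 - k² s² = (w + 1 + t²/2) / D` and
`ds/dt = √(2√3) (w + 1 + t²/2) / (w D^{3/2})`, hence
`(ds/dt)² (1 - t⁶) = √3 (1 - s²)(1 - k² s²)`: the substitution `s = Φ(t)` turns
`3^{1/4} dt / √(1 - t⁶)` into `ds / √((1 - s²)(1 - k² s²))`. As `Φ` is strictly increasing with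
`Φ 0 = 0` and `Φ 1 = 1`, it maps `(0, 1)` bijectively onto itself, and the change of variables
formula for injective maps needs no integrability hypothesis.
-/

open Real MeasureTheory Set

noncomputable section

def quarticSqrt (t : ℝ) : ℝ := √(1 + t ^ 2 + t ^ 4)

def legendreSubstDenom (t : ℝ) : ℝ := 1 + (√3 - 1) * t ^ 2 + quarticSqrt t

def legendreSubst (t : ℝ) : ℝ := √(2 * √3) * t / √(legendreSubstDenom t)

def legendreSubstDeriv (t : ℝ) : ℝ :=
  √(2 * √3) * (quarticSqrt t + 1 + t ^ 2 / 2) /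
    (quarticSqrt t * (legendreSubstDenom t * √(legendreSubstDenom t)))

lemma sq_sqrt_three : √3 ^ 2 = 3 := sq_sqrt (by norm_num)

lemma one_lt_sqrt_three : 1 < √3 := lt_sqrt_of_sq_lt (by norm_num)

lemma quarticSqrt_pos (t : ℝ) : 0 < quarticSqrt t := sqrt_pos.2 (by positivity)

lemma quarticSqrt_sq (t : ℝ) : quarticSqrt t ^ 2 = 1 + t ^ 2 + t ^ 4 := sq_sqrt (by positivity)

lemma legendreSubstDenom_pos (t : ℝ) : 0 < legendreSubstDenom t := by
  have := quarticSqrt_pos t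
  have := one_lt_sqrt_three
  unfold legendreSubstDenom; nlinarith [sq_nonneg t]

lemma sq_sqrt_legendreSubstDenom (t : ℝ) : √(legendreSubstDenom t) ^ 2 = legendreSubstDenom t :=
  sq_sqrt (legendreSubstDenom_pos t).le

lemma legendreSubstDenom_mul (t : ℝ) :
    legendreSubstDenom t * (quarticSqrt t + 1 - (√3 + 1) * t ^ 2) =
      2 * (1 - t ^ 2) * (quarticSqrt t + 1 + t ^ 2 / 2) := by
  unfold legendreSubstDenom
  linear_combination quarticSqrt_sq t - t ^ 4 * sq_sqrt_three

lemma legendreSubst_sq (t : ℝ) :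
    legendreSubst t ^ 2 = 2 * √3 * t ^ 2 / legendreSubstDenom t := by
  rw [legendreSubst, div_pow, mul_pow, sq_sqrt (by positivity), sq_sqrt_legendreSubstDenom]

lemma one_sub_legendreSubst_sq (t : ℝ) :
    1 - legendreSubst t ^ 2 =
      (quarticSqrt t + 1 - (√3 + 1) * t ^ 2) / legendreSubstDenom t := by
  rw [legendreSubst_sq, eq_div_iff (legendreSubstDenom_pos t).ne', sub_mul,
    div_mul_cancel₀ _ (legendreSubstDenom_pos t).ne']
  unfold legendreSubstDenom; ring

lemma one_sub_mul_legendreSubst_sq (t : ℝ) :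
    1 - (2 - √3) / 4 * legendreSubst t ^ 2 =
      (quarticSqrt t + 1 + t ^ 2 / 2) / legendreSubstDenom t := by
  rw [legendreSubst_sq]
  field_simp [(legendreSubstDenom_pos t).ne']
  unfold legendreSubstDenom
  linear_combination (4 * t ^ 2) * sq_sqrt_three

lemma hasDerivAt_legendreSubst (t : ℝ) :
    HasDerivAt legendreSubst (legendreSubstDeriv t) t := by
  have hw : HasDerivAt quarticSqrt ((2 * t + 4 * t ^ 3) / (2 * quarticSqrt t)) t := by
    refine HasDerivAt.sqrt ?_ (by positivity)
    exact (((hasDerivAt_pow 2 t).const_add 1).add (hasDerivAt_pow 4 t)).congr_deriv (by norm_num)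
  have hD : HasDerivAt legendreSubstDenom
      (2 * (√3 - 1) * t + (2 * t + 4 * t ^ 3) / (2 * quarticSqrt t)) t :=
    ((((hasDerivAt_pow 2 t).const_mul (√3 - 1)).const_add 1).add hw).congr_deriv (by norm_num; ring)
  have hsqrtD := hD.sqrt (legendreSubstDenom_pos t).ne'
  refine (((hasDerivAt_id t).const_mul √(2 * √3)).div hsqrtD
    (sqrt_pos.2 (legendreSubstDenom_pos t)).ne').congr_deriv ?_
  have := (quarticSqrt_pos t).ne'
  have := (sqrt_pos.2 (legendreSubstDenom_pos t)).ne'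
  have := (legendreSubstDenom_pos t).ne'
  unfold legendreSubstDeriv
  field_simp
  rw [sq_sqrt_legendreSubstDenom, id]
  unfold legendreSubstDenom
  linear_combination (4 * (1 + (√3 - 1) * t ^ 2 + quarticSqrt t)) * quarticSqrt_sq t

lemma legendreSubstDeriv_pos (t : ℝ) : 0 < legendreSubstDeriv t := by
  have := quarticSqrt_pos t
  have := legendreSubstDenom_pos t
  unfold legendreSubstDeriv; positivity

lemma strictMono_legendreSubst : StrictMono legendreSubst :=
  strictMono_of_hasDerivAt_pos hasDerivAt_legendreSubst legendreSubstDeriv_pos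

lemma continuous_legendreSubst : Continuous legendreSubst :=
  continuous_iff_continuousAt.2 fun t => (hasDerivAt_legendreSubst t).continuousAt

lemma legendreSubst_zero : legendreSubst 0 = 0 := by simp [legendreSubst]

lemma legendreSubst_one : legendreSubst 1 = 1 := by
  have hD : legendreSubstDenom 1 = 2 * √3 := by
    norm_num [legendreSubstDenom, quarticSqrt]; ring
  rw [legendreSubst, hD, mul_one, div_self (by positivity)]

lemma image_legendreSubst_Ioo : legendreSubst '' Ioo 0 1 = Ioo 0 1 := by
  refine Subset.antisymm ?_ ?_
  · rintro _ ⟨t, ⟨h0, h1⟩, rfl⟩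
    rw [← legendreSubst_zero, ← legendreSubst_one]
    exact ⟨strictMono_legendreSubst h0, strictMono_legendreSubst h1⟩
  · have := intermediate_value_Ioo zero_le_one continuous_legendreSubst.continuousOn
    rwa [legendreSubst_zero, legendreSubst_one] at this

lemma legendreSubstDeriv_sq_mul (t : ℝ) :
    legendreSubstDeriv t ^ 2 * (1 - t ^ 6) =
      √3 * ((1 - legendreSubst t ^ 2) * (1 - (2 - √3) / 4 * legendreSubst t ^ 2)) := by
  rw [one_sub_legendreSubst_sq, one_sub_mul_legendreSubst_sq, legendreSubstDeriv, div_pow,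
    mul_pow, mul_pow, mul_pow, sq_sqrt (by positivity), sq_sqrt_legendreSubstDenom]
  have := (quarticSqrt_pos t).ne'
  have := (legendreSubstDenom_pos t).ne'
  field_simp
  linear_combination (-quarticSqrt t ^ 2 * (2 * (quarticSqrt t + 1) + t ^ 2)) *
      legendreSubstDenom_mul t - (2 * (quarticSqrt t + 1) + t ^ 2) ^ 2 * (1 - t ^ 2) *
      quarticSqrt_sq t

lemma mul_rpow_neg_half_eq_of_sq {a b x y : ℝ} (ha : 0 ≤ a) (hb : 0 ≤ b) (hx : 0 < x)
    (hy : 0 < y) (h : a ^ 2 * y = b ^ 2 * x) :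
    a * x ^ (-(1 / 2) : ℝ) = b * y ^ (-(1 / 2) : ℝ) := by
  have hsqrt : a * √y = b * √x := by
    rw [← sqrt_sq ha, ← sqrt_sq hb, ← sqrt_mul (sq_nonneg a), ← sqrt_mul (sq_nonneg b), h]
  rw [rpow_neg hx.le, rpow_neg hy.le, ← sqrt_eq_rpow, ← sqrt_eq_rpow]
  field_simp [(sqrt_pos.2 hx).ne', (sqrt_pos.2 hy).ne']
  linear_combination hsqrt

lemma three_rpow_quarter_sq : ((3 : ℝ) ^ (1 / 4 : ℝ)) ^ 2 = √3 := by
  rw [← rpow_natCast, ← rpow_mul (by norm_num), sqrt_eq_rpow]; norm_num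

lemma abs_legendreSubstDeriv_mul_rpow {t : ℝ} (ht : t ∈ Ioo 0 1) :
    |legendreSubstDeriv t| *
        ((1 - legendreSubst t ^ 2) * (1 - (2 - √3) / 4 * legendreSubst t ^ 2)) ^ (-(1 / 2) : ℝ) =
      (3 : ℝ) ^ (1 / 4 : ℝ) * (1 - t ^ 6) ^ (-(1 / 2) : ℝ) := by
  obtain ⟨hs0, hs1⟩ : legendreSubst t ∈ Ioo 0 1 :=
    image_legendreSubst_Ioo ▸ mem_image_of_mem _ ht
  have hk : (2 - √3) / 4 < 1 := by linarith [one_lt_sqrt_three]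
  rw [abs_of_pos (legendreSubstDeriv_pos t)]
  refine mul_rpow_neg_half_eq_of_sq (legendreSubstDeriv_pos t).le (by positivity) ?_ ?_ ?_
  · have hs2 : legendreSubst t ^ 2 < 1 := by nlinarith
    exact mul_pos (by linarith) (by nlinarith)
  · nlinarith [pow_lt_one₀ ht.1.le ht.2 (by norm_num : 6 ≠ 0)]
  · rw [legendreSubstDeriv_sq_mul, three_rpow_quarter_sq]

end

/-- `π_{2,6}/2 = K(k)/3^{1/4}` with modulus `k² = (2−√3)/4`. -/
theorem pi26_eq_elliptic :
    (∫ t in (0:ℝ)..1, (1 - t ^ 6) ^ (-(1/2) : ℝ))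
      = (3:ℝ) ^ (-(1/4) : ℝ)
        * ∫ s in (0:ℝ)..1, ((1 - s ^ 2) * (1 - (2 - Real.sqrt 3)/4 * s ^ 2)) ^ (-(1/2) : ℝ) := by
  have hcov := integral_image_eq_integral_abs_deriv_smul (measurableSet_Ioo (a := 0) (b := 1))
    (fun t _ => (hasDerivAt_legendreSubst t).hasDerivWithinAt)
    strictMono_legendreSubst.injective.injOn
    (fun s : ℝ => ((1 - s ^ 2) * (1 - (2 - √3) / 4 * s ^ 2)) ^ (-(1 / 2) : ℝ))
  simp only [smul_eq_mul] at hcov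
  rw [image_legendreSubst_Ioo, setIntegral_congr_fun measurableSet_Ioo
    (fun t ht => abs_legendreSubstDeriv_mul_rpow ht), integral_const_mul] at hcov
  simp only [intervalIntegral.integral_of_le zero_le_one, integral_Ioc_eq_integral_Ioo, hcov,
    ← mul_assoc, ← rpow_add three_pos]
  norm_num
end

section
/- Let F(x) := ∫₀ˣ (1−t⁶)^{−1/2} dt. For every V ∈ [0,1], F( √( (1−V²)/(1+2V²) ) ) = F(1) − F(V). (This is the complementary-angle formula sin_{2,6}(π_{2,6}/2 − v) = √((1 − sin_{2,6}²v)/(1 + 2 sin_{2,6}²v)).) -/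
open Real Set MeasureTheory intervalIntegral

/-! With `φ v = √((1 - v²) / (1 + 2 v²))` one checks `φ' v · √(1 - v⁶) = -√(1 - (φ v)⁶)` on
`(0, 1)`, so by the fundamental theorem of calculus `F ∘ φ + F` has derivative zero there. The
singularity of the integrand at `1` is dominated by `(1 - t)^{-1/2}`, hence integrable, so
`F ∘ φ + F` is continuous on `[0, 1]` and equals its value `F 1 + F 0 = F 1` at `0`. -/

theorem constant_of_hasDerivAt_zero {f : ℝ → ℝ} {a b : ℝ} (hcont : ContinuousOn f (Icc a b))
    (hderiv : ∀ x ∈ Ioo a b, HasDerivAt f 0 x) : ∀ x ∈ Icc a b, f x = f a := by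
  rintro x ⟨hax, hxb⟩
  rcases hax.eq_or_lt with rfl | hax
  · rfl
  obtain ⟨c, hc, hslope⟩ := exists_hasDerivAt_eq_slope f (fun _ => 0) hax
    (hcont.mono (Icc_subset_Icc_right hxb))
    (fun y hy => hderiv y ⟨hy.1, hy.2.trans_le hxb⟩)
  rw [eq_comm, div_eq_zero_iff, sub_eq_zero, sub_eq_zero] at hslope
  exact hslope.resolve_right hax.ne'

theorem intervalIntegrable_one_sub_pow_rpow {n : ℕ} (hn : n ≠ 0) {r : ℝ} (hr₀ : -1 < r)
    (hr₁ : r ≤ 0) : IntervalIntegrable (fun t : ℝ => (1 - t ^ n) ^ r) volume 0 1 := by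
  have hdom : IntervalIntegrable (fun t : ℝ => (1 - t) ^ r) volume 0 1 := by
    simpa using ((intervalIntegrable_rpow' hr₀ (a := 0) (b := 1)).comp_sub_left 1).symm
  refine hdom.mono_fun (Measurable.aestronglyMeasurable (by fun_prop)) ?_
  filter_upwards [ae_restrict_mem measurableSet_uIoc] with t ht
  rw [uIoc_of_le zero_le_one] at ht
  obtain ⟨ht₀, ht₁⟩ := ht
  rw [norm_of_nonneg (rpow_nonneg (by simpa using pow_le_one₀ ht₀.le ht₁) _),
    norm_of_nonneg (rpow_nonneg (by linarith) _)]
  rcases ht₁.eq_or_lt with rfl | ht₁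
  · simp
  · exact rpow_le_rpow_of_nonpos (by linarith)
      (by linarith [pow_le_of_le_one ht₀.le ht₁.le hn]) hr₁

theorem F26_zero : F26 0 = 0 := integral_same

theorem continuousOn_F26 : ContinuousOn F26 (Icc 0 1) := by
  have := continuousOn_primitive_interval' (intervalIntegrable_one_sub_pow_rpow (n := 6)
    (by norm_num) (r := -(1/2)) (by norm_num) (by norm_num)) left_mem_uIcc
  rwa [uIcc_of_le zero_le_one] at this

theorem one_sub_pow_pos {n : ℕ} (hn : n ≠ 0) {x : ℝ} (hx : x ∈ Ioo (-1) 1) :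
    0 < 1 - x ^ n := by
  have : |x| ^ n < 1 := pow_lt_one₀ (abs_nonneg x) (abs_lt.2 hx) hn
  rw [← abs_pow] at this
  linarith [le_abs_self (x ^ n)]

theorem hasDerivAt_F26 {x : ℝ} (hx : x ∈ Ioo (-1) 1) :
    HasDerivAt F26 (√(1 - x ^ 6))⁻¹ x := by
  have hcont : ContinuousOn (fun t : ℝ => (1 - t ^ 6) ^ (-(1/2) : ℝ)) (Ioo (-1) 1) :=
    fun t ht => ((continuous_const.sub (continuous_pow 6)).continuousAt.rpow_const
      (Or.inl (one_sub_pow_pos (by norm_num) ht).ne')).continuousWithinAt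
  have hint : IntervalIntegrable (fun t : ℝ => (1 - t ^ 6) ^ (-(1/2) : ℝ)) volume 0 x :=
    (hcont.mono (ordConnected_Ioo.uIcc_subset (by norm_num) hx)).intervalIntegrable
  rw [sqrt_eq_rpow, ← rpow_neg (one_sub_pow_pos (by norm_num) hx).le]
  exact integral_hasDerivAt_right hint (hcont.stronglyMeasurableAtFilter isOpen_Ioo _ hx)
    (hcont.continuousAt (isOpen_Ioo.mem_nhds hx))

noncomputable def complement26 (v : ℝ) : ℝ := √((1 - v ^ 2) / (1 + 2 * v ^ 2))

theorem complement26_zero : complement26 0 = 1 := by simp [complement26]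

theorem continuous_complement26 : Continuous complement26 := by
  unfold complement26
  fun_prop (disch := intro v; positivity)

theorem complement26_mem_Icc (v : ℝ) : complement26 v ∈ Icc 0 1 :=
  ⟨sqrt_nonneg _, sqrt_le_one.2 <| (div_le_one (by positivity)).2 (by nlinarith)⟩

theorem complement26_mem_Ioo {v : ℝ} (hv : v ∈ Ioo 0 1) : complement26 v ∈ Ioo 0 1 := by
  obtain ⟨hv₀, hv₁⟩ := hv
  refine ⟨sqrt_pos.2 (div_pos (by nlinarith) (by positivity)), ?_⟩
  rw [complement26, sqrt_lt' one_pos, one_pow, div_lt_one (by positivity)]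
  nlinarith

theorem hasDerivAt_complement26 {v : ℝ} (hv : v ∈ Ioo 0 1) :
    HasDerivAt complement26 (-(√(1 - complement26 v ^ 6) / √(1 - v ^ 6))) v := by
  obtain ⟨hv₀, hv₁⟩ := hv
  have hs : 0 < 1 + 2 * v ^ 2 := by positivity
  have hv2 : 0 < 1 - v ^ 2 := by nlinarith
  have hw : 0 < (1 - v ^ 2) / (1 + 2 * v ^ 2) := div_pos hv2 hs
  have hnum : HasDerivAt (fun w : ℝ => 1 - w ^ 2) (-(2 * v)) v := by
    simpa using (hasDerivAt_pow 2 v).const_sub 1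
  have hden : HasDerivAt (fun w : ℝ => 1 + 2 * w ^ 2) (2 * (2 * v)) v := by
    simpa using ((hasDerivAt_pow 2 v).const_mul 2).const_add 1
  refine (hnum.div hden hs.ne').sqrt hw.ne' |>.congr_deriv ?_
  have hφ : 0 < complement26 v := (complement26_mem_Ioo ⟨hv₀, hv₁⟩).1
  have hφsq : complement26 v ^ 2 = (1 - v ^ 2) / (1 + 2 * v ^ 2) := sq_sqrt hw.le
  have hv6 : 0 < 1 - v ^ 6 := one_sub_pow_pos (by norm_num) ⟨by linarith, hv₁⟩
  have hφ6 : complement26 v ^ 6 = ((1 - v ^ 2) / (1 + 2 * v ^ 2)) ^ 3 := by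
    rw [← hφsq, ← pow_mul]
  change _ / (2 * complement26 v) = _
  rw [show -(2 * v) * (1 + 2 * v ^ 2) - (1 - v ^ 2) * (2 * (2 * v)) = -(6 * v) by ring,
    ← sqrt_div' _ hv6.le, eq_comm, neg_eq_iff_eq_neg, neg_div, neg_div, neg_neg,
    sqrt_eq_iff_eq_sq (div_nonneg (sub_nonneg.2 (pow_le_one₀ hφ.le (complement26_mem_Icc v).2))
      hv6.le) (by positivity), div_pow, mul_pow, hφsq, hφ6]
  field_simp
  ring

theorem hasDerivAt_F26_comp_complement26_add_F26 {v : ℝ} (hv : v ∈ Ioo 0 1) :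
    HasDerivAt (fun w => F26 (complement26 w) + F26 w) 0 v := by
  have hφ := complement26_mem_Ioo hv
  have hφ6 : 0 < 1 - complement26 v ^ 6 :=
    one_sub_pow_pos (by norm_num) ⟨by linarith [hφ.1], hφ.2⟩
  refine ((hasDerivAt_F26 ⟨by linarith [hφ.1], hφ.2⟩).comp v (hasDerivAt_complement26 hv)).add
    (hasDerivAt_F26 ⟨by linarith [hv.1], hv.2⟩) |>.congr_deriv ?_
  rw [div_eq_mul_inv, mul_neg, inv_mul_cancel_left₀ (sqrt_pos.2 hφ6).ne', neg_add_cancel]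

theorem continuousOn_F26_comp_complement26_add_F26 :
    ContinuousOn (fun w => F26 (complement26 w) + F26 w) (Icc 0 1) :=
  (continuousOn_F26.comp continuous_complement26.continuousOn
    fun v _ => complement26_mem_Icc v).add continuousOn_F26

/-- The complementary-angle formula
`sin_{2,6}(π_{2,6}/2 − v) = √((1 − sin_{2,6}² v)/(1 + 2 sin_{2,6}² v))`. -/
theorem complementary_angle_sin_two_six (V : ℝ) (hV : V ∈ Set.Icc (0:ℝ) 1) :
    F26 (Real.sqrt ((1 - V ^ 2) / (1 + 2 * V ^ 2))) = F26 1 - F26 V := by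
  have := constant_of_hasDerivAt_zero continuousOn_F26_comp_complement26_add_F26
    (fun v hv => hasDerivAt_F26_comp_complement26_add_F26 hv) V hV
  rw [complement26_zero, F26_zero, add_zero] at this
  exact eq_sub_of_add_eq this
end

section
/- Let 1 < q < ∞ and q* := q/(q−1). Then 2 · ∫₀¹ (1−t^q)^{−1/2} dt = 2^{2/q} · ∫₀¹ (1−t^q)^{−(q−1)/q} dt. (Equivalently, π_{2,q} = 2^{2/q} F_{q*,q}(1) = 2^{2/q} π_{q*,q}/2; this follows from the multiple-angle formula at s = 1.) -/
/-!
The substitution `x = t ^ q` turns `∫₀¹ (1 - t ^ q) ^ (-a) dt` into `q⁻¹ B(1/q, 1 - a)`, so the two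
sides are `2 q⁻¹ B(1/q, 1/2)` and `2 ^ (2/q) q⁻¹ B(1/q, 1/q)`. Writing both Beta values through
`Γ`, their ratio is exactly Legendre's duplication formula `Γ(s) Γ(s + 1/2) = 2 ^ (1 - 2s) √π Γ(2s)`
at `s = 1/q`.
-/

open MeasureTheory Set Real

theorem intervalIntegral_comp_rpow_zero_one {E : Type*} [NormedAddCommGroup E] [NormedSpace ℝ E]
    (f : ℝ → E) {q : ℝ} (hq : 0 < q) :
    ∫ t in (0:ℝ)..1, f (t ^ q) = q⁻¹ • ∫ x in (0:ℝ)..1, x ^ (q⁻¹ - 1) • f x := by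
  -- Extending by zero outside `(0, 1]` reduces to the substitution on `Ioi 0`, which needs no
  -- integrability of `f`.
  have key := integral_comp_rpow_Ioi_of_pos (g := (Ioc 0 1).indicator fun t ↦ f (t ^ q))
    (inv_pos.2 hq)
  have hind : ∀ x ∈ Ioi (0:ℝ),
      (q⁻¹ * x ^ (q⁻¹ - 1)) • (Ioc 0 1).indicator (fun t ↦ f (t ^ q)) (x ^ q⁻¹)
        = (Ioc 0 1).indicator (fun x ↦ (q⁻¹ * x ^ (q⁻¹ - 1)) • f x) x := by
    intro x hx
    have hmem : x ^ q⁻¹ ∈ Ioc 0 1 ↔ x ∈ Ioc 0 1 := by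
      simp [mem_Ioc, hx.out, rpow_pos_of_pos hx.out, rpow_le_one_iff_of_pos hx.out, hq.le,
        hq.not_ge]
    by_cases h : x ∈ Ioc 0 1
    · rw [indicator_of_mem (hmem.2 h), indicator_of_mem h, rpow_inv_rpow hx.out.le hq.ne']
    · rw [indicator_of_notMem (mt hmem.1 h), indicator_of_notMem h, smul_zero]
  rw [setIntegral_congr_fun measurableSet_Ioi hind, setIntegral_indicator measurableSet_Ioc,
    setIntegral_indicator measurableSet_Ioc, inter_eq_right.2 Ioc_subset_Ioi_self] at key
  rw [intervalIntegral.integral_of_le zero_le_one, intervalIntegral.integral_of_le zero_le_one,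
    ← key, ← integral_smul]
  simp only [mul_smul]

namespace Real

noncomputable def betaIntegral (u v : ℝ) : ℝ :=
  ∫ x in (0:ℝ)..1, x ^ (u - 1) * (1 - x) ^ (v - 1)

theorem ofReal_betaIntegral (u v : ℝ) :
    (betaIntegral u v : ℂ) = Complex.betaIntegral u v := by
  rw [betaIntegral, Complex.betaIntegral, ← intervalIntegral.integral_ofReal]
  refine intervalIntegral.integral_congr fun x hx ↦ ?_
  rw [uIcc_of_le zero_le_one] at hx
  push_cast
  rw [Complex.ofReal_cpow hx.1, Complex.ofReal_cpow (sub_nonneg.2 hx.2)]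
  push_cast
  rfl

theorem betaIntegral_eq_Gamma_mul_div {u v : ℝ} (hu : 0 < u) (hv : 0 < v) :
    betaIntegral u v = Gamma u * Gamma v / Gamma (u + v) := by
  have h := Complex.Gamma_mul_Gamma_eq_betaIntegral (s := u) (t := v)
    (by simpa using hu) (by simpa using hv)
  rw [← ofReal_betaIntegral, ← Complex.ofReal_add, Complex.Gamma_ofReal, Complex.Gamma_ofReal,
    Complex.Gamma_ofReal] at h
  rw [eq_div_iff (Gamma_pos_of_pos (add_pos hu hv)).ne', mul_comm]
  exact_mod_cast h.symm

theorem two_mul_betaIntegral_half {s : ℝ} (hs : 0 < s) :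
    2 * betaIntegral s (1 / 2) = 2 ^ (2 * s) * betaIntegral s s := by
  have hdup := Gamma_mul_Gamma_add_half s
  have hpow : (2:ℝ) ^ (2 * s) * 2 ^ (1 - 2 * s) = 2 := by
    rw [← rpow_add two_pos, add_sub_cancel, rpow_one]
  rw [betaIntegral_eq_Gamma_mul_div hs one_half_pos, betaIntegral_eq_Gamma_mul_div hs hs,
    Gamma_one_half_eq, ← two_mul, mul_div_assoc', mul_div_assoc',
    div_eq_div_iff (Gamma_pos_of_pos (by positivity)).ne' (Gamma_pos_of_pos (by positivity)).ne']
  linear_combination (-(2 ^ (2 * s)) * Gamma s) * hdup - (Gamma s * √π * Gamma (2 * s)) * hpow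

end Real

theorem integral_one_sub_rpow_rpow_neg {q : ℝ} (hq : 0 < q) (a : ℝ) :
    ∫ t in (0:ℝ)..1, (1 - t ^ q) ^ (-a) = q⁻¹ * betaIntegral q⁻¹ (1 - a) := by
  rw [intervalIntegral_comp_rpow_zero_one (fun y ↦ (1 - y) ^ (-a)) hq, betaIntegral,
    sub_sub_cancel_left, smul_eq_mul]
  rfl

/-- `π_{2,q} = 2^{2/q} π_{q*,q}/2` for `1 < q < ∞`, where `q* = q/(q−1)`. -/
theorem pi_two_q_eq (q : ℝ) (hq : 1 < q) :
    2 * ∫ t in (0:ℝ)..1, (1 - t ^ q) ^ (-(1/2) : ℝ)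
      = 2 ^ ((2:ℝ)/q) * ∫ t in (0:ℝ)..1, (1 - t ^ q) ^ (-((q - 1)/q)) := by
  have hq0 : 0 < q := zero_lt_one.trans hq
  have hdup := two_mul_betaIntegral_half (inv_pos.2 hq0)
  rw [integral_one_sub_rpow_rpow_neg hq0, integral_one_sub_rpow_rpow_neg hq0,
    show (1:ℝ) - 1 / 2 = 1 / 2 by norm_num, show 1 - (q - 1) / q = q⁻¹ by field_simp; ring,
    div_eq_mul_inv 2 q]
  linear_combination q⁻¹ * hdup
end
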